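/- arXiv:1408.4866 — 9 statements merged into one kernel-verified Lean document; each statement's English description precedes it below -/
import Mathlib

section
/- The number of r-regular partitions of n (partitions in which each part has multiplicity less than r) equals the number of r-class regular partitions of n (partitions with no part divisible by r), for any integer r ≥ 2. -/
open Nat Finset
open scoped Classical

lemma Nat.Partition.countRestricted_eq_filter_forall_count_lt (n : ℕ) {m : ℕ} (hm : 0 < m) :
    countRestricted n m = univ.filter fun l : n.Partition => ∀ i, l.parts.count i < m := by
  ext l
  simp only [countRestricted, mem_filter, mem_univ, true_and]
  refine ⟨fun h i => ?_, fun h i _ => h i⟩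
  by_cases hi : i ∈ l.parts
  · exact h i hi
  · rwa [Multiset.count_eq_zero_of_notMem hi]

theorem regular_eq_class_regular (r n : ℕ) (hr : 2 ≤ r) :
    (Finset.univ.filter (fun l : n.Partition => ∀ i, l.parts.count i < r)).card =
    (Finset.univ.filter (fun l : n.Partition => ∀ p ∈ l.parts, ¬ r ∣ p)).card := by
  have hr0 : 0 < r := by omega
  rw [← Nat.Partition.countRestricted_eq_filter_forall_count_lt n hr0,
    ← Nat.Partition.card_restricted_eq_card_countRestricted n hr0, Nat.Partition.restricted]
end

section
/- For a tuple r = (r_1, ..., r_m) of pairwise coprime integers ≥ 2 and a positive integer j not divisible by any r_i, the sum over all r-class regular partitions ρ of n of the multiplicity of j as a part of ρ equals the sum over all tuples (k_1, ..., k_m) of nonnegative integers and over all r-class regular partitions ρ of n of the number of part-sizes i whose multiplicity m_i(ρ) is at least r_1^{k_1}···r_m^{k_m}·j. -/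
open Nat Finset
open scoped Classical

/-- The set of `(r 0, …, r (m-1))`-class regular partitions of `n`. -/
noncomputable def CPm (m : ℕ) (r : Fin m → ℕ) (n : ℕ) : Finset (n.Partition) :=
  Finset.univ.filter (fun l => ∀ p ∈ l.parts, ∀ i, ¬ r i ∣ p)

/-- The number of part-sizes `i` whose multiplicity in `ρ` is at least `j` (for `j ≥ 1`). -/
noncomputable def numGE {n : ℕ} (ρ : n.Partition) (j : ℕ) : ℕ :=
  (ρ.parts.toFinset.filter (fun i => j ≤ ρ.parts.count i)).card

/-- `V r j n`: the total multiplicity of the part `j` over all class regular partitions. -/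
noncomputable def Vm (m : ℕ) (r : Fin m → ℕ) (j n : ℕ) : ℕ :=
  ∑ ρ ∈ CPm m r n, ρ.parts.count j

/-- `W r j n`: the total number of part-sizes of multiplicity `≥ j` over class regular
partitions. -/
noncomputable def Wm (m : ℕ) (r : Fin m → ℕ) (j n : ℕ) : ℕ :=
  ∑ ρ ∈ CPm m r n, numGE ρ j


/-! Removing `t` copies of a part `i` is a bijection from the class regular partitions of `n`
with `m_i ≥ t` onto the class regular partitions of `n - t i` (for `i` itself class regular), so
`V_{r,j,n} = ∑_{s ≥ 1} |CP_{r,n-sj}|` and `W_{r,t,n} = ∑_{i regular} |CP_{r,n-ti}|`.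
As the `r_a` are pairwise coprime, every `s ≥ 1` is uniquely `i * ∏ r_a ^ k_a` with `i` class
regular (`k_a` is the `r_a`-adic valuation of `s`), and this decomposition matches the two sums
term by term. -/

open Function

namespace Nat.Partition

theorem count_parts_le {n : ℕ} (p : n.Partition) (i : ℕ) : p.parts.count i ≤ n := by
  have hcard := Multiset.card_nsmul_le_sum (s := p.parts) (a := 1) fun _ hx => p.parts_pos hx
  rw [smul_eq_mul, mul_one, p.parts_sum] at hcard
  exact (Multiset.count_le_card _ _).trans hcard

theorem sum_parts_sub_replicate {n t a : ℕ} {p : n.Partition}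
    (h : Multiset.replicate t a ≤ p.parts) : (p.parts - Multiset.replicate t a).sum + t * a = n := by
  rw [← smul_eq_mul, ← Multiset.sum_replicate, ← Multiset.sum_add, tsub_add_cancel_of_le h,
    p.parts_sum]

def replicatePartsEquiv {n a t : ℕ} (ha : 0 < a) (hta : t * a ≤ n) :
    {p : n.Partition // Multiset.replicate t a ≤ p.parts} ≃ (n - t * a).Partition where
  toFun p :=
    { parts := p.1.parts - Multiset.replicate t a
      parts_pos := fun hi => p.1.parts_pos (Multiset.mem_of_le tsub_le_self hi)
      parts_sum := by have := sum_parts_sub_replicate p.2; omega }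
  invFun q :=
    ⟨{ parts := q.parts + Multiset.replicate t a
       parts_pos := fun hi => (Multiset.mem_add.mp hi).elim q.parts_pos
         fun hi => Multiset.eq_of_mem_replicate hi ▸ ha
       parts_sum := by
         rw [Multiset.sum_add, Multiset.sum_replicate, smul_eq_mul, q.parts_sum]
         omega }, Multiset.le_add_left _ _⟩
  left_inv p := Subtype.ext <| Partition.ext <| tsub_add_cancel_of_le p.2
  right_inv q := Partition.ext <| add_tsub_cancel_right _ _

end Nat.Partition

section RegularDecomposition

variable {ι : Type*} [Fintype ι] {r : ι → ℕ}

theorem prod_pow_padicValNat_dvd (hcop : Pairwise (Nat.Coprime on r)) (s : ℕ) :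
    ∏ a, r a ^ padicValNat (r a) s ∣ s := by
  have hcast : ∏ a, ((r a ^ padicValNat (r a) s : ℕ) : ℤ) ∣ s :=
    Fintype.prod_dvd_of_coprime (fun a b hab => Nat.isCoprime_iff_coprime.mpr ((hcop hab).pow _ _))
      fun a => Int.natCast_dvd_natCast.mpr pow_padicValNat_dvd
  exact_mod_cast hcast

theorem not_dvd_div_prod_pow_padicValNat (hcop : Pairwise (Nat.Coprime on r)) {s : ℕ}
    (hs : s ≠ 0) {a : ι} (ha : r a ≠ 1) :
    ¬ r a ∣ s / ∏ b, r b ^ padicValNat (r b) s := by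
  intro h
  have hdvd : r a ^ (padicValNat (r a) s + 1) ∣ s := by
    conv_rhs => rw [← Nat.div_mul_cancel (prod_pow_padicValNat_dvd hcop s)]
    exact pow_succ' (r a) _ ▸ mul_dvd_mul h (dvd_prod_of_mem _ (mem_univ a))
  have := (pow_dvd_iff_le_padicValNat ha hs).mp hdvd
  omega

theorem padicValNat_mul_prod_pow (hr : ∀ a, 1 < r a) (hcop : Pairwise (Nat.Coprime on r))
    {i : ℕ} (hi : i ≠ 0) (hreg : ∀ a, ¬ r a ∣ i) (k : ι → ℕ) (a : ι) :
    padicValNat (r a) (i * ∏ b, r b ^ k b) = k a := by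
  have hcofactor : ¬ r a ∣ i * ∏ b ∈ univ.erase a, r b ^ k b := fun h =>
    hreg a <| (Nat.Coprime.prod_right fun b hb =>
      (hcop (ne_of_mem_erase hb).symm).pow_right _).dvd_of_dvd_mul_right h
  have hne : i * ∏ b ∈ univ.erase a, r b ^ k b ≠ 0 :=
    mul_ne_zero hi (prod_ne_zero_iff.mpr fun b _ => pow_ne_zero _ (hr b).ne_bot)
  rw [← mul_prod_erase _ _ (mem_univ a), mul_left_comm, padicValNat_base_pow_mul (hr a) hne,
    padicValNat.eq_zero_of_not_dvd hcofactor, zero_add]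

def regularDecomp (r : ι → ℕ) (s : ℕ) : (ι → ℕ) × ℕ :=
  (fun a => padicValNat (r a) s, s / ∏ a, r a ^ padicValNat (r a) s)

theorem regularDecomp_snd_mul_prod (hcop : Pairwise (Nat.Coprime on r)) (s : ℕ) :
    (regularDecomp r s).2 * ∏ a, r a ^ (regularDecomp r s).1 a = s :=
  Nat.div_mul_cancel (prod_pow_padicValNat_dvd hcop s)

theorem regularDecomp_mul_prod_pow (hr : ∀ a, 1 < r a) (hcop : Pairwise (Nat.Coprime on r))
    {i : ℕ} (hi : i ≠ 0) (hreg : ∀ a, ¬ r a ∣ i) (k : ι → ℕ) :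
    regularDecomp r (i * ∏ a, r a ^ k a) = (k, i) := by
  have hP : 0 < ∏ a, r a ^ k a := prod_pos fun a _ => pow_pos (zero_lt_one.trans (hr a)) _
  simp only [regularDecomp, padicValNat_mul_prod_pow hr hcop hi hreg k, Nat.mul_div_cancel _ hP]

theorem sum_sum_regular_mul_prod_pow [DecidableEq ι] (hr : ∀ a, 1 < r a)
    (hcop : Pairwise (Nat.Coprime on r)) {M : Type*} [AddCommMonoid M] {n : ℕ} (g : ℕ → M)
    (hg : ∀ s, n < s → g s = 0) :
    ∑ k ∈ Fintype.piFinset fun _ => range (n + 1),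
      ∑ i ∈ Icc 1 n with ∀ a, ¬ r a ∣ i, g (i * ∏ a, r a ^ k a) = ∑ s ∈ Icc 1 n, g s := by
  have hrecompose := regularDecomp_snd_mul_prod hcop
  rw [← sum_product', eq_comm]
  refine sum_of_injOn (regularDecomp r)
    (fun s _ s' _ h => by rw [← hrecompose s, ← hrecompose s', h]) ?_ ?_
    fun s _ => congrArg g (hrecompose s).symm
  · intro s hs
    have hs : 1 ≤ s ∧ s ≤ n := mem_Icc.mp hs
    have hquot : (regularDecomp r s).2 ≠ 0 := fun h => by
      have := hrecompose s
      rw [h, zero_mul] at this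
      omega
    simp only [coe_product, coe_filter, Set.mem_prod, mem_coe, Fintype.mem_piFinset, mem_range,
      Set.mem_ofPred_eq, mem_Icc]
    refine ⟨fun a => Nat.lt_succ_of_le ((padicValNat_le_self s).trans hs.2),
      ⟨Nat.one_le_iff_ne_zero.mpr hquot, (Nat.div_le_self _ _).trans hs.2⟩,
      fun a => not_dvd_div_prod_pow_padicValNat hcop (by omega) (hr a).ne'⟩
  · rintro ⟨k, i⟩ hki hnot
    obtain ⟨-, ⟨hi, -⟩, hreg⟩ : _ ∧ (1 ≤ i ∧ i ≤ n) ∧ ∀ a, ¬ r a ∣ i := by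
      simpa only [mem_product, mem_filter, mem_Icc] using hki
    by_contra hne
    refine hnot ⟨i * ∏ a, r a ^ k a, mem_Icc.mpr ⟨?_, not_lt.mp (mt (hg _) hne)⟩,
      regularDecomp_mul_prod_pow hr hcop (by omega) hreg k⟩
    exact Nat.mul_pos hi (prod_pos fun a _ => pow_pos (zero_lt_one.trans (hr a)) _)

end RegularDecomposition

section ClassRegular

variable {m : ℕ} {r : Fin m → ℕ}

noncomputable def cpCardSub (m : ℕ) (r : Fin m → ℕ) (n u : ℕ) : ℕ :=
  if u ≤ n then #(CPm m r (n - u)) else 0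

theorem card_filter_le_count_eq_cpCardSub (n : ℕ) {i t : ℕ} (hi : 0 < i)
    (hreg : ∀ a, ¬ r a ∣ i) :
    #{ρ ∈ CPm m r n | t ≤ ρ.parts.count i} = cpCardSub m r n (t * i) := by
  unfold cpCardSub
  split_ifs with hle
  · let e := Nat.Partition.replicatePartsEquiv hi hle
    refine card_bij'
      (fun ρ hρ => e ⟨ρ, Multiset.le_count_iff_replicate_le.mp (mem_filter.mp hρ).2⟩)
      (fun σ _ => (e.symm σ).1) ?_ ?_ (fun ρ _ => by simp) (fun σ _ => by simp)
    · intro ρ hρ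
      simp only [CPm, mem_filter, mem_univ, true_and] at hρ ⊢
      exact fun p hp => hρ.1 p (Multiset.mem_of_le tsub_le_self hp)
    · intro σ hσ
      simp only [CPm, mem_filter, mem_univ, true_and] at hσ ⊢
      refine ⟨fun p hp => ?_, ?_⟩
      · rcases Multiset.mem_add.mp hp with hp | hp
        · exact hσ p hp
        · exact Multiset.eq_of_mem_replicate hp ▸ hreg
      · exact Multiset.le_count_iff_replicate_le.mpr (Multiset.le_add_left _ _)
  · refine card_eq_zero.mpr (filter_eq_empty_iff.mpr fun ρ _ hcount => hle ?_)
    have := ρ.sum_parts_sub_replicate (Multiset.le_count_iff_replicate_le.mp hcount)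
    omega

theorem Vm_eq_sum_cpCardSub {j n : ℕ} (hj : 0 < j) (hjr : ∀ a, ¬ r a ∣ j) :
    Vm m r j n = ∑ s ∈ Icc 1 n, cpCardSub m r n (s * j) := by
  have hcount (ρ : n.Partition) : ρ.parts.count j = #{s ∈ Icc 1 n | s ≤ ρ.parts.count j} := by
    have hle := ρ.count_parts_le j
    have hfilter : {s ∈ Icc 1 n | s ≤ ρ.parts.count j} = Icc 1 (ρ.parts.count j) := by
      ext s
      simp only [mem_filter, mem_Icc]
      omega
    rw [hfilter, Nat.card_Icc, Nat.add_sub_cancel]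
  calc Vm m r j n = ∑ ρ ∈ CPm m r n, #{s ∈ Icc 1 n | s ≤ ρ.parts.count j} :=
        sum_congr rfl fun ρ _ => hcount ρ
    _ = ∑ s ∈ Icc 1 n, #{ρ ∈ CPm m r n | s ≤ ρ.parts.count j} :=
        sum_card_bipartiteAbove_eq_sum_card_bipartiteBelow _
    _ = _ := sum_congr rfl fun s _ => card_filter_le_count_eq_cpCardSub n hj hjr

theorem Wm_eq_sum_cpCardSub {t n : ℕ} (ht : 0 < t) :
    Wm m r t n = ∑ i ∈ Icc 1 n with ∀ a, ¬ r a ∣ i, cpCardSub m r n (t * i) := by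
  have hnumGE : ∀ ρ ∈ CPm m r n,
      numGE ρ t = #{i ∈ {i ∈ Icc 1 n | ∀ a, ¬ r a ∣ i} | t ≤ ρ.parts.count i} := by
    intro ρ hρ
    simp only [CPm, mem_filter, mem_univ, true_and] at hρ
    unfold numGE
    congr 1
    ext i
    simp only [mem_filter, Multiset.mem_toFinset, mem_Icc]
    constructor
    · rintro ⟨hi, hcount⟩
      exact ⟨⟨⟨ρ.parts_pos hi, ρ.le_of_mem_parts hi⟩, hρ i hi⟩, hcount⟩
    · rintro ⟨-, hcount⟩
      exact ⟨Multiset.count_pos.mp (ht.trans_le hcount), hcount⟩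
  calc Wm m r t n
      = ∑ ρ ∈ CPm m r n, #{i ∈ {i ∈ Icc 1 n | ∀ a, ¬ r a ∣ i} | t ≤ ρ.parts.count i} :=
        sum_congr rfl hnumGE
    _ = ∑ i ∈ Icc 1 n with ∀ a, ¬ r a ∣ i, #{ρ ∈ CPm m r n | t ≤ ρ.parts.count i} :=
        sum_card_bipartiteAbove_eq_sum_card_bipartiteBelow _
    _ = _ := sum_congr rfl fun i hi => by
        obtain ⟨⟨hi, -⟩, hreg⟩ := mem_filter.mp hi |>.imp_left mem_Icc.mp
        exact card_filter_le_count_eq_cpCardSub n hi hreg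

theorem Wm_eq_zero_of_lt {t n : ℕ} (h : n < t) : Wm m r t n = 0 :=
  sum_eq_zero fun ρ _ => card_eq_zero.mpr <| filter_eq_empty_iff.mpr fun i _ hcount =>
    (ρ.count_parts_le i).not_gt (h.trans_le hcount)

end ClassRegular

theorem V_eq_tsum_W (m : ℕ) (r : Fin m → ℕ) (hr : ∀ i, 2 ≤ r i)
    (hcop : ∀ i j, i ≠ j → Nat.Coprime (r i) (r j)) (j n : ℕ) (hj : 0 < j)
    (hjr : ∀ i, ¬ r i ∣ j) :
    Vm m r j n = ∑' k : Fin m → ℕ, Wm m r ((∏ i, r i ^ k i) * j) n := by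
  have hP (k : Fin m → ℕ) : 0 < ∏ i, r i ^ k i := prod_pos fun a _ => pow_pos (by linarith [hr a]) _
  have hcutoff (s : ℕ) (hs : n < s) : cpCardSub m r n (s * j) = 0 :=
    if_neg (hs.trans_le (Nat.le_mul_of_pos_right s hj)).not_ge
  rw [tsum_eq_sum (s := Fintype.piFinset fun _ => range (n + 1)), Vm_eq_sum_cpCardSub hj hjr,
    ← sum_sum_regular_mul_prod_pow hr hcop _ hcutoff]
  · refine sum_congr rfl fun k _ => ?_
    rw [Wm_eq_sum_cpCardSub (Nat.mul_pos (hP k) hj)]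
    -- the two filters differ only in their decidability instances
    exact sum_congr (by congr!) fun i _ => by ring_nf
  · intro k hk
    obtain ⟨a, ha⟩ : ∃ a, n < k a := by simpa [Fintype.mem_piFinset] using hk
    refine Wm_eq_zero_of_lt ?_
    calc n < k a := ha
      _ < r a ^ k a := Nat.lt_pow_self (hr a)
      _ ≤ ∏ i, r i ^ k i := Nat.le_of_dvd (hP k) (dvd_prod_of_mem _ (mem_univ a))
      _ ≤ (∏ i, r i ^ k i) * j := Nat.le_mul_of_pos_right _ hj
end

section
/- For pairwise coprime integers r_1, ..., r_m ≥ 2 and any tuple j = (j_1,...,j_m) not all with j_i ≡ 0, the product over (r_1,...,r_m)-class regular partitions ρ of n of Π_i m_i(ρ)! equals Π_{i=1}^m r_i^{c_{r_i,n}} times the product over such partitions of the product of all parts, where c_{r_i,n} = Σ_{j not divisible by any r_l} Σ_{k_1,...,k_m ≥ 0} k_i · W_{r, r_1^{k_1}···r_m^{k_m} j, n}. -/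
open Nat Finset
open scoped Classical

/-- `c_{r_i,n} = Σ_{j not divisible by any r_l} Σ_{k_1,…,k_m ≥ 0} k_i · W_{r, r^k j, n}`. -/
noncomputable def cExpm (m : ℕ) (r : Fin m → ℕ) (i : Fin m) (n : ℕ) : ℕ :=
  ∑' j : ℕ, ∑' k : Fin m → ℕ,
    if ∀ l, ¬ r l ∣ j then k i * Wm m r ((∏ l, r l ^ k l) * j) n else 0

/-!
Writing `c! = ∏_{u ≤ c} u` turns the product of the factorials into `∏_u u ^ W_{r,u,n}`, and the
product of all parts is `∏_j j ^ M_j` with `M_j = Σ_ρ m_j(ρ)`. Every `u ≥ 1` is uniquely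
`u = r_1^{k_1} ⋯ r_m^{k_m} j` with `j` divisible by no `r_l` (pairwise coprimality makes `k_l` the
multiplicity of `r_l` in `u`). Splitting `u ^ W_u` accordingly, the powers of the `r_l` collect
into `r_l ^ c_{r_l,n}` and what is left is `∏_j j ^ (Σ_k W_{r^k j})`. Finally
`Σ_k W_{r^k j} = M_j`: deleting `u` copies of the part `i` shows that the partitions with
`m_i ≥ u` correspond to the class-regular partitions of `n - i u`. Writing `p(k) = #CP_{r,k}`,
this gives `W_u = Σ_i p(n - i u)` over free `i` and `M_j = Σ_t p(n - j t)`, and the factorization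
`t = r^k i` matches the two sums.
-/

noncomputable def totalCount (m : ℕ) (r : Fin m → ℕ) (n j : ℕ) : ℕ :=
  ∑ ρ ∈ CPm m r n, ρ.parts.count j

noncomputable def freeParts (m : ℕ) (r : Fin m → ℕ) (n : ℕ) : Finset ℕ :=
  {j ∈ Icc 1 n | ∀ l, ¬ r l ∣ j}

def expBox (m n : ℕ) : Finset (Fin m → ℕ) :=
  Fintype.piFinset fun _ => range (n + 1)

lemma Nat.Partition.count_le {n : ℕ} (ρ : n.Partition) (i : ℕ) : ρ.parts.count i ≤ n :=
  calc ρ.parts.count i ≤ Multiset.card ρ.parts := Multiset.count_le_card _ _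
    _ = (ρ.parts.map fun _ => 1).sum := by simp
    _ ≤ (ρ.parts.map id).sum := Multiset.sum_map_le_sum_map _ _ fun _ hx => ρ.parts_pos hx
    _ = n := by simp [ρ.parts_sum]

lemma Nat.Partition.mem_Icc_of_mem_parts {n : ℕ} {ρ : n.Partition} {i : ℕ} (h : i ∈ ρ.parts) :
    i ∈ Icc 1 n :=
  mem_Icc.mpr ⟨ρ.parts_pos h, Nat.Partition.le_of_mem_parts h⟩

lemma filter_Icc_le_eq_Icc {c n : ℕ} (h : c ≤ n) : {t ∈ Icc 1 n | t ≤ c} = Icc 1 c := by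
  ext t
  simp only [mem_filter, mem_Icc]
  omega

lemma factorial_eq_prod_Icc_ite {c n : ℕ} (h : c ≤ n) :
    c ! = ∏ u ∈ Icc 1 n, if u ≤ c then u else 1 := by
  rw [← prod_filter, filter_Icc_le_eq_Icc h, ← Ico_add_one_right_eq_Icc, prod_Ico_id_eq_factorial]

lemma eq_sum_Icc_ite {c n : ℕ} (h : c ≤ n) : c = ∑ t ∈ Icc 1 n, if t ≤ c then 1 else 0 := by
  rw [← card_filter, filter_Icc_le_eq_Icc h, Nat.card_Icc, Nat.add_sub_cancel]

lemma prod_count_factorial_eq_prod_pow_numGE {n : ℕ} (ρ : n.Partition) :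
    ∏ i ∈ ρ.parts.toFinset, (ρ.parts.count i)! = ∏ u ∈ Icc 1 n, u ^ numGE ρ u := by
  simp_rw [factorial_eq_prod_Icc_ite (ρ.count_le _)]
  rw [prod_comm]
  refine prod_congr rfl fun u _ => ?_
  rw [← prod_filter, prod_const, numGE]

lemma parts_prod_eq_prod_pow_count {n : ℕ} (ρ : n.Partition) :
    ρ.parts.prod = ∏ u ∈ Icc 1 n, u ^ ρ.parts.count u := by
  rw [prod_multiset_count]
  refine prod_subset (fun i hi => ?_) (fun i _ hi => ?_)
  · exact Nat.Partition.mem_Icc_of_mem_parts (Multiset.mem_toFinset.mp hi)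
  · rw [Multiset.count_eq_zero_of_notMem (Multiset.mem_toFinset.not.mp hi), pow_zero]

lemma numGE_eq_sum_Icc {n : ℕ} (ρ : n.Partition) {u : ℕ} (hu : 1 ≤ u) :
    numGE ρ u = ∑ i ∈ Icc 1 n, if u ≤ ρ.parts.count i then 1 else 0 := by
  rw [numGE, ← card_filter]
  congr 1
  ext i
  simp only [mem_filter, Multiset.mem_toFinset]
  refine ⟨fun ⟨hi, hc⟩ => ⟨Nat.Partition.mem_Icc_of_mem_parts hi, hc⟩, fun ⟨_, hc⟩ => ⟨?_, hc⟩⟩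
  rw [← Multiset.count_pos]
  omega

section

variable {m : ℕ} {r : Fin m → ℕ} {n : ℕ}

lemma mem_CPm {ρ : n.Partition} : ρ ∈ CPm m r n ↔ ∀ p ∈ ρ.parts, ∀ l, ¬ r l ∣ p := by
  simp [CPm]

lemma prod_prod_count_factorial_eq_prod_pow_Wm :
    ∏ ρ ∈ CPm m r n, ∏ i ∈ ρ.parts.toFinset, (ρ.parts.count i)! =
      ∏ u ∈ Icc 1 n, u ^ Wm m r u n := by
  simp_rw [prod_count_factorial_eq_prod_pow_numGE]
  rw [prod_comm]
  exact prod_congr rfl fun u _ => prod_pow_eq_pow_sum _ _ _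

lemma totalCount_eq_zero {j : ℕ} (hj : ¬ ∀ l, ¬ r l ∣ j) : totalCount m r n j = 0 :=
  sum_eq_zero fun _ hρ => Multiset.count_eq_zero.mpr fun hjρ => hj (mem_CPm.mp hρ j hjρ)

lemma prod_parts_prod_eq_prod_pow_totalCount :
    ∏ ρ ∈ CPm m r n, ρ.parts.prod = ∏ j ∈ freeParts m r n, j ^ totalCount m r n j := by
  simp_rw [parts_prod_eq_prod_pow_count]
  rw [prod_comm, freeParts, prod_filter]
  refine prod_congr rfl fun u _ => ?_
  rw [prod_pow_eq_pow_sum]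
  split_ifs with hu
  · rfl
  · rw [← totalCount, totalCount_eq_zero hu, pow_zero]

lemma Wm_eq_zero {u : ℕ} (hu : n < u) : Wm m r u n = 0 :=
  sum_eq_zero fun ρ _ => card_eq_zero.mpr <| filter_eq_empty_iff.mpr fun i _ => by
    have := ρ.count_le i
    omega

lemma free_and_mul_le_of_le_count {ρ : n.Partition} (hρ : ρ ∈ CPm m r n) {i u : ℕ}
    (hu : 1 ≤ u) (h : u ≤ ρ.parts.count i) : (∀ l, ¬ r l ∣ i) ∧ i * u ≤ n := by
  have hrep : Multiset.replicate u i ≤ ρ.parts := Multiset.le_count_iff_replicate_le.mp h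
  refine ⟨mem_CPm.mp hρ i (Multiset.count_pos.mp (by omega)), ?_⟩
  calc i * u = (Multiset.replicate u i).sum := by simp [mul_comm]
    _ ≤ ρ.parts.sum := by
      obtain ⟨v, hv⟩ := Multiset.le_iff_exists_add.mp hrep
      simp [hv]
    _ = n := ρ.parts_sum

-- The bijection deletes `u` copies of the part `i`, and its inverse adds them back.
lemma card_filter_le_count_of_free {i u : ℕ} (hi : 1 ≤ i) (hfree : ∀ l, ¬ r l ∣ i)
    (h : i * u ≤ n) :
    #{ρ ∈ CPm m r n | u ≤ ρ.parts.count i} = #(CPm m r (n - i * u)) := by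
  have hsum : (Multiset.replicate u i).sum = i * u := by simp [mul_comm]
  have hle {ρ : n.Partition} (hρ : ρ ∈ {ρ ∈ CPm m r n | u ≤ ρ.parts.count i}) :
      Multiset.replicate u i ≤ ρ.parts :=
    Multiset.le_count_iff_replicate_le.mp (mem_filter.mp hρ).2
  refine card_bij'
    (fun ρ hρ => ⟨ρ.parts - Multiset.replicate u i,
      fun hp => ρ.parts_pos (Multiset.mem_of_le tsub_le_self hp), ?_⟩)
    (fun σ _ => ⟨σ.parts + Multiset.replicate u i, fun hp => ?_, ?_⟩) ?_ ?_ ?_ ?_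
  · have := congrArg Multiset.sum (tsub_add_cancel_of_le (hle hρ))
    rw [Multiset.sum_add, hsum, ρ.parts_sum] at this
    omega
  · rcases Multiset.mem_add.mp hp with hp | hp
    · exact σ.parts_pos hp
    · rwa [Multiset.eq_of_mem_replicate hp]
  · rw [Multiset.sum_add, hsum, σ.parts_sum]
    omega
  · intro ρ hρ
    exact mem_CPm.mpr fun p hp =>
      mem_CPm.mp (mem_filter.mp hρ).1 p (Multiset.mem_of_le tsub_le_self hp)
  · intro σ hσ
    refine mem_filter.mpr ⟨mem_CPm.mpr fun p hp => ?_, by simp⟩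
    rcases Multiset.mem_add.mp hp with hp | hp
    · exact mem_CPm.mp hσ p hp
    · rwa [Multiset.eq_of_mem_replicate hp]
  · exact fun ρ hρ => Nat.Partition.ext (tsub_add_cancel_of_le (hle hρ))
  · exact fun σ _ => Nat.Partition.ext (add_tsub_cancel_right _ _)

lemma card_filter_le_count {i u : ℕ} (hi : 1 ≤ i) (hu : 1 ≤ u) :
    #{ρ ∈ CPm m r n | u ≤ ρ.parts.count i} =
      if (∀ l, ¬ r l ∣ i) ∧ i * u ≤ n then #(CPm m r (n - i * u)) else 0 := by
  split_ifs with h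
  · exact card_filter_le_count_of_free hi h.1 h.2
  · exact card_eq_zero.mpr <| filter_eq_empty_iff.mpr fun ρ hρ hcount =>
      h (free_and_mul_le_of_le_count hρ hu hcount)

lemma Wm_eq_sum_freeParts {u : ℕ} (hu : 1 ≤ u) :
    Wm m r u n = ∑ i ∈ freeParts m r n, if i * u ≤ n then #(CPm m r (n - i * u)) else 0 := by
  simp_rw [Wm, numGE_eq_sum_Icc _ hu]
  rw [sum_comm, freeParts, sum_filter]
  refine sum_congr rfl fun i hi => ?_
  rw [← card_filter, card_filter_le_count (mem_Icc.mp hi).1 hu, ite_and]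

lemma totalCount_eq_sum_Icc {j : ℕ} (hj : j ∈ freeParts m r n) :
    totalCount m r n j = ∑ t ∈ Icc 1 n, if j * t ≤ n then #(CPm m r (n - j * t)) else 0 := by
  obtain ⟨hj, hfree⟩ := mem_filter.mp hj
  rw [totalCount, sum_congr rfl fun ρ _ => eq_sum_Icc_ite (ρ.count_le j), sum_comm]
  refine sum_congr rfl fun t ht => ?_
  rw [← card_filter, card_filter_le_count (mem_Icc.mp hj).1 (mem_Icc.mp ht).1]
  simp [hfree]

lemma prod_pow_pos (hr : ∀ l, 0 < r l) (k : Fin m → ℕ) : 0 < ∏ l, r l ^ k l :=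
  prod_pos fun l _ => pow_pos (hr l) _

lemma exists_eq_prod_pow_mul (hr : ∀ l, 2 ≤ r l) {u : ℕ} (hu : u ≠ 0) :
    ∃ (j : ℕ) (k : Fin m → ℕ), (∀ l, ¬ r l ∣ j) ∧ u = (∏ l, r l ^ k l) * j := by
  induction u using Nat.strong_induction_on with
  | _ u ih =>
    by_cases hdvd : ∃ l, r l ∣ u
    · obtain ⟨l, v, rfl⟩ := hdvd
      have hv : v ≠ 0 := by rintro rfl; simp at hu
      obtain ⟨j, k, hj, rfl⟩ := ih v (by have := hr l; nlinarith [Nat.pos_of_ne_zero hv]) hv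
      refine ⟨j, k + Pi.single l 1, hj, ?_⟩
      simp only [Pi.add_apply, pow_add, prod_mul_distrib, Pi.single_apply, pow_ite, pow_one,
        pow_zero, prod_ite_eq', mem_univ, if_true]
      ring
    · exact ⟨u, 0, not_exists.mp hdvd, by simp⟩

lemma multiplicity_prod_pow_mul (hr : ∀ l, 0 < r l) (hcop : ∀ i j, i ≠ j → Coprime (r i) (r j))
    {j : ℕ} (hj : ∀ l, ¬ r l ∣ j) (k : Fin m → ℕ) (l : Fin m) :
    multiplicity (r l) ((∏ l', r l' ^ k l') * j) = k l := by
  have hsplit :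
      (∏ l', r l' ^ k l') * j = r l ^ k l * ((∏ l' ∈ univ.erase l, r l' ^ k l') * j) := by
    rw [← mul_prod_erase _ _ (mem_univ l), mul_assoc]
  have hcopC : Coprime (r l) (∏ l' ∈ univ.erase l, r l' ^ k l') :=
    Coprime.prod_right fun l' hl' => (hcop l l' (ne_of_mem_erase hl').symm).pow_right _
  rw [hsplit]
  refine multiplicity_eq_of_dvd_of_not_dvd (dvd_mul_right _ _) fun hdvd => hj l ?_
  rw [pow_succ, Nat.mul_dvd_mul_iff_left (pow_pos (hr l) _)] at hdvd
  exact hcopC.dvd_of_dvd_mul_left hdvd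

lemma prod_pow_mul_injective (hr : ∀ l, 0 < r l) (hcop : ∀ i j, i ≠ j → Coprime (r i) (r j))
    {j j' : ℕ} {k k' : Fin m → ℕ} (hj : ∀ l, ¬ r l ∣ j) (hj' : ∀ l, ¬ r l ∣ j')
    (h : (∏ l, r l ^ k l) * j = (∏ l, r l ^ k' l) * j') : j = j' ∧ k = k' := by
  have hk : k = k' := funext fun l => by
    rw [← multiplicity_prod_pow_mul hr hcop hj k l, h, multiplicity_prod_pow_mul hr hcop hj' k' l]
  subst hk
  exact ⟨Nat.eq_of_mul_eq_mul_left (prod_pow_pos hr k) h, rfl⟩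

lemma lt_prod_pow_mul (hr : ∀ l, 2 ≤ r l) {j : ℕ} (hj : j ≠ 0) (k : Fin m → ℕ) (l : Fin m) :
    k l < (∏ l', r l' ^ k l') * j :=
  calc k l < 2 ^ k l := Nat.lt_two_pow_self
    _ ≤ r l ^ k l := Nat.pow_le_pow_left (hr l) _
    _ ≤ ∏ l', r l' ^ k l' :=
      Nat.le_of_dvd (prod_pow_pos (fun l' => Nat.zero_lt_of_lt (hr l')) k)
        (dvd_prod_of_mem _ (mem_univ l))
    _ ≤ (∏ l', r l' ^ k l') * j := Nat.le_mul_of_pos_right _ (Nat.pos_of_ne_zero hj)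

-- The bound `k l ≤ n` built into `expBox` loses nothing, by `lt_prod_pow_mul`.
@[to_additive]
lemma prod_Icc_eq_prod_freeParts_prod_expBox {M : Type*} [CommMonoid M]
    (hr : ∀ l, 2 ≤ r l) (hcop : ∀ i j, i ≠ j → Coprime (r i) (r j))
    {f : ℕ → M} (hf : ∀ v, n < v → f v = 1) :
    ∏ u ∈ Icc 1 n, f u = ∏ j ∈ freeParts m r n, ∏ k ∈ expBox m n, f ((∏ l, r l ^ k l) * j) := by
  have hr0 : ∀ l, 0 < r l := fun l => Nat.zero_lt_of_lt (hr l)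
  rw [← prod_product']
  symm
  refine prod_bij_ne_one (fun p _ _ => (∏ l, r l ^ p.2 l) * p.1) ?_ ?_ ?_ fun _ _ _ => rfl
  · rintro ⟨j, k⟩ hp hf1
    obtain ⟨hj, -⟩ := mem_filter.mp (mem_product.mp hp).1
    exact mem_Icc.mpr ⟨Nat.mul_pos (prod_pow_pos hr0 k) (mem_Icc.mp hj).1,
      not_lt.mp fun h => hf1 (hf _ h)⟩
  · rintro ⟨j, k⟩ hp _ ⟨j', k'⟩ hp' _ h
    obtain ⟨rfl, rfl⟩ := prod_pow_mul_injective hr0 hcop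
      (mem_filter.mp (mem_product.mp hp).1).2 (mem_filter.mp (mem_product.mp hp').1).2 h
    rfl
  · intro u hu hfu
    obtain ⟨hu1, hun⟩ := mem_Icc.mp hu
    obtain ⟨j, k, hfree, rfl⟩ := exists_eq_prod_pow_mul hr (by omega : u ≠ 0)
    have hj : j ≠ 0 := by rintro rfl; simp at hu1
    have hjn : j ≤ n := (Nat.le_mul_of_pos_left _ (prod_pow_pos hr0 k)).trans hun
    refine ⟨(j, k), mem_product.mpr ⟨mem_filter.mpr ⟨mem_Icc.mpr ⟨by omega, hjn⟩, hfree⟩, ?_⟩,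
      hfu, rfl⟩
    simp only [expBox, Fintype.mem_piFinset, mem_range]
    exact fun l => by have := lt_prod_pow_mul hr hj k l; omega

lemma sum_expBox_Wm_eq_totalCount (hr : ∀ l, 2 ≤ r l)
    (hcop : ∀ i j, i ≠ j → Coprime (r i) (r j)) {j : ℕ} (hj : j ∈ freeParts m r n) :
    ∑ k ∈ expBox m n, Wm m r ((∏ l, r l ^ k l) * j) n = totalCount m r n j := by
  have hj1 : 1 ≤ j := (mem_Icc.mp (mem_filter.mp hj).1).1
  have hvanish : ∀ t, n < t → (if j * t ≤ n then #(CPm m r (n - j * t)) else 0) = 0 :=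
    fun t ht => if_neg (by nlinarith)
  rw [totalCount_eq_sum_Icc hj, sum_Icc_eq_sum_freeParts_sum_expBox hr hcop hvanish, sum_comm]
  refine sum_congr rfl fun k _ => ?_
  rw [Wm_eq_sum_freeParts (Nat.mul_pos (prod_pow_pos (fun l => Nat.zero_lt_of_lt (hr l)) k) hj1)]
  refine sum_congr rfl fun i _ => ?_
  rw [show i * ((∏ l, r l ^ k l) * j) = j * ((∏ l, r l ^ k l) * i) by ring]

lemma cExpm_eq_sum_freeParts (hr : ∀ l, 2 ≤ r l) (l : Fin m) :
    cExpm m r l n =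
      ∑ j ∈ freeParts m r n, ∑ k ∈ expBox m n, k l * Wm m r ((∏ l', r l' ^ k l') * j) n := by
  have hvanish {j : ℕ} {k : Fin m → ℕ} (hk : n < (∏ l', r l' ^ k l') * j) :
      k l * Wm m r ((∏ l', r l' ^ k l') * j) n = 0 := by
    rw [Wm_eq_zero hk, mul_zero]
  rw [cExpm, tsum_eq_sum (s := freeParts m r n) fun j hj => ?outer]
  case outer =>
    refine (tsum_congr fun k => ?_).trans tsum_zero
    split_ifs with hfree
    · have hj0 : j ≠ 0 := by rintro rfl; exact hfree l (dvd_zero _)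
      have hjn : n < j := not_le.mp fun hjn =>
        hj (mem_filter.mpr ⟨mem_Icc.mpr ⟨Nat.one_le_iff_ne_zero.mpr hj0, hjn⟩, hfree⟩)
      exact hvanish (hjn.trans_le (Nat.le_mul_of_pos_left _
        (prod_pow_pos (fun l' => Nat.zero_lt_of_lt (hr l')) k)))
    · rfl
  refine sum_congr rfl fun j hj => ?_
  obtain ⟨hj, hfree⟩ := mem_filter.mp hj
  have hj0 : j ≠ 0 := by have := (mem_Icc.mp hj).1; omega
  simp only [if_pos hfree]
  refine tsum_eq_sum fun k hk => hvanish ?_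
  simp only [expBox, Fintype.mem_piFinset, mem_range, not_forall, not_lt] at hk
  obtain ⟨l', hl'⟩ := hk
  have := lt_prod_pow_mul hr hj0 k l'
  omega

end

/-- `b_{r,n} = ∏_{i=1}^m r_i^{c_{r_i,n}} · a_{r,n}`. -/
theorem prod_factorials_eq_multi (m : ℕ) (r : Fin m → ℕ) (hr : ∀ i, 2 ≤ r i)
    (hcop : ∀ i j, i ≠ j → Nat.Coprime (r i) (r j)) (n : ℕ) :
    (∏ ρ ∈ CPm m r n, ∏ i ∈ ρ.parts.toFinset, (ρ.parts.count i)!) =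
    (∏ i : Fin m, r i ^ cExpm m r i n) * ∏ ρ ∈ CPm m r n, ρ.parts.prod := by
  have hW : ∀ v, n < v → v ^ Wm m r v n = 1 := fun v hv => by rw [Wm_eq_zero hv, pow_zero]
  rw [prod_prod_count_factorial_eq_prod_pow_Wm,
    prod_Icc_eq_prod_freeParts_prod_expBox hr hcop hW, prod_parts_prod_eq_prod_pow_totalCount]
  simp_rw [mul_pow, ← prod_pow, ← pow_mul, prod_mul_distrib]
  congr 1
  · simp_rw [prod_comm (s := expBox m n) (t := univ), prod_comm (s := freeParts m r n) (t := univ),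
      prod_pow_eq_pow_sum, cExpm_eq_sum_freeParts hr]
  · refine prod_congr rfl fun j hj => ?_
    rw [prod_pow_eq_pow_sum, sum_expBox_Wm_eq_totalCount hr hcop hj]
end

section
/- For r ≥ 2, the generating function Σ_n c_{r,n} q^n equals Φ_r(q) · Σ_{k ≥ 1} q^{rk}/(1 - q^{rk}), where Φ_r(q) = Π_{n: r ∤ n}(1-q^n)^{-1} and c_{r,n} = Σ_{j: r∤j} Σ_{k ≥ 1} k·W_{r, r^k j, n}. -/
open Nat Finset PowerSeries
open scoped Classical

/-- The set of `r`-class regular partitions of `n`: no part divisible by `r`. -/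
noncomputable def CP (r n : ℕ) : Finset (n.Partition) :=
  Finset.univ.filter (fun l => ∀ p ∈ l.parts, ¬ r ∣ p)

/-- `W r j n = Σ_{ρ ∈ CP_{r,n}} #{i : m_i(ρ) ≥ j}`. -/
noncomputable def W (r j n : ℕ) : ℕ := ∑ ρ ∈ CP r n, numGE ρ j

/-- `c_{r,n} = Σ_{j ≥ 1, r ∤ j} Σ_{k ≥ 1} k · W_{r, r^k j, n}` (the `k = 0` summand vanishes). -/
noncomputable def cExp (r n : ℕ) : ℕ :=
  ∑' j : ℕ, ∑' k : ℕ, if ¬ r ∣ j then k * W r (r ^ k * j) n else 0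

/-- Truncation of `Φ_r(q) = ∏_{k ≥ 1, r ∤ k} (1 - q^k)⁻¹` at `k ≤ N`. -/
noncomputable def PhiTrunc (r N : ℕ) : PowerSeries ℚ :=
  ∏ k ∈ Finset.Icc 1 N, if ¬ r ∣ k then (1 - (PowerSeries.X : PowerSeries ℚ) ^ k)⁻¹ else 1

/-!
Every positive integer is uniquely `r ^ k * j` with `r ∤ j`, so `c_{r,n} = Σ_t ν_r(t) W_{r,t,n}`,
where `ν_r(t) = padicValNat r t` is the exponent of the largest power of `r` dividing `t`.
Removing `t` copies of a part `i` gives `W_{r,t,n} = Σ_{r ∤ i, i t ≤ n} |CP_{r,n-it}|`. On the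
other side, the `n`-th coefficient of `Φ_r(q) q^{rk} / (1 - q^{rk})` is `Σ_{rk ∣ u} |CP_{r,n-u}|`,
and `(t, l, i) ↦ (i r^(l-1), i t)`, for `1 ≤ l ≤ ν_r(t)` and `r ∤ i`, is a bijection onto the
pairs `(k, u)` with `rk ∣ u`.
-/
open scoped PowerSeries.WithPiTopology

section RAdic

variable {r : ℕ}

lemma ne_zero_of_not_dvd {j : ℕ} (hj : ¬ r ∣ j) : j ≠ 0 := by
  rintro rfl; exact hj (dvd_zero r)

lemma padicValNat_pow_mul_of_not_dvd (hr : 1 < r) {j : ℕ} (hj : ¬ r ∣ j) (k : ℕ) :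
    padicValNat r (r ^ k * j) = k := by
  rw [padicValNat_base_pow_mul hr (ne_zero_of_not_dvd hj), padicValNat.eq_zero_of_not_dvd hj,
    zero_add]

lemma divMaxPow_pow_mul_of_not_dvd (hr : r ≠ 0) {j : ℕ} (hj : ¬ r ∣ j) (k : ℕ) :
    (r ^ k * j).divMaxPow r = j := by
  rw [Nat.divMaxPow_base_pow_mul hr, Nat.divMaxPow, Nat.maxPowDvdDiv_of_not_dvd hj]

lemma divMaxPow_dvd_self (k : ℕ) : k.divMaxPow r ∣ k :=
  Dvd.intro_left _ (Nat.pow_padicValNat_mul_divMaxPow r k)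

lemma pow_succ_padicValNat_dvd_div_divMaxPow {k u : ℕ} (hk : k ≠ 0) (h : r * k ∣ u) :
    r ^ (padicValNat r k + 1) ∣ u / k.divMaxPow r := by
  have hi : k.divMaxPow r ≠ 0 := fun h0 => hk (Nat.eq_zero_of_zero_dvd (h0 ▸ divMaxPow_dvd_self k))
  obtain ⟨m, rfl⟩ := h
  have hu : r * k * m = k.divMaxPow r * (r ^ (padicValNat r k + 1) * m) := by
    conv_lhs => rw [← Nat.pow_padicValNat_mul_divMaxPow r k]
    ring
  rw [hu, Nat.mul_div_cancel_left _ (Nat.pos_of_ne_zero hi)]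
  exact dvd_mul_right _ _

lemma card_filter_pow_dvd (hr : 1 < r) {N t : ℕ} (ht : t ∈ Icc 1 N) :
    #{l ∈ Icc 1 N | r ^ l ∣ t} = padicValNat r t := by
  simp only [mem_Icc] at ht
  have hv : padicValNat r t ≤ N := (Nat.padicValNat_le_self t).trans ht.2
  have : (Icc 1 N).filter (r ^ · ∣ t) = Icc 1 (padicValNat r t) := by
    ext l
    simp only [mem_filter, mem_Icc, Nat.pow_dvd_iff_le_padicValNat hr.ne' (by omega : t ≠ 0)]
    omega
  rw [this, Nat.card_Icc, Nat.add_sub_cancel]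

variable {M : Type*} [AddCommMonoid M]

lemma sum_filter_pow_mul_eq_sum_Icc (hr : 1 < r) (N : ℕ) (f : ℕ → ℕ → M) :
    ∑ x ∈ range (N + 1) ×ˢ range (N + 1) with ¬ r ∣ x.1 ∧ r ^ x.2 * x.1 ≤ N,
        f (r ^ x.2 * x.1) x.2 =
      ∑ t ∈ Icc 1 N, f t (padicValNat r t) := by
  refine sum_nbij' (fun x => r ^ x.2 * x.1) (fun t => (t.divMaxPow r, padicValNat r t))
    ?_ ?_ ?_ ?_ ?_
  · rintro ⟨j, k⟩ hx
    simp only [mem_filter] at hx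
    have := Nat.pos_of_ne_zero (ne_zero_of_not_dvd hx.2.1)
    have := Nat.one_le_pow k r (by omega)
    simp only [mem_Icc]
    exact ⟨by nlinarith, hx.2.2⟩
  · intro t ht
    simp only [mem_Icc] at ht
    have hdecomp := Nat.pow_padicValNat_mul_divMaxPow r t
    have := Nat.one_le_pow (padicValNat r t) r (by omega)
    simp only [mem_filter, mem_product, mem_range]
    refine ⟨⟨?_, ?_⟩, Nat.not_dvd_divMaxPow hr (by omega), by omega⟩
    · nlinarith
    · exact Nat.lt_succ_of_le ((Nat.padicValNat_le_self t).trans ht.2)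
  · rintro ⟨j, k⟩ hx
    simp only [mem_filter] at hx
    rw [divMaxPow_pow_mul_of_not_dvd (by omega) hx.2.1, padicValNat_pow_mul_of_not_dvd hr hx.2.1]
  · intro t _
    exact Nat.pow_padicValNat_mul_divMaxPow r t
  · rintro ⟨j, k⟩ hx
    simp only [mem_filter] at hx
    rw [padicValNat_pow_mul_of_not_dvd hr hx.2.1]

lemma sum_filter_triple_eq_sum_filter_pair (hr : 1 < r) (N : ℕ) (G : ℕ → M) :
    ∑ x ∈ (Icc 1 N ×ˢ Icc 1 N) ×ˢ Icc 1 N with r ^ x.1.2 ∣ x.1.1 ∧ ¬ r ∣ x.2 ∧ x.2 * x.1.1 ≤ N,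
        G (x.2 * x.1.1) =
      ∑ y ∈ Icc 1 N ×ˢ Icc 1 N with r * y.1 ∣ y.2, G y.2 := by
  refine sum_nbij' (fun x => (x.2 * r ^ (x.1.2 - 1), x.2 * x.1.1))
    (fun y => ((y.2 / y.1.divMaxPow r, padicValNat r y.1 + 1), y.1.divMaxPow r)) ?_ ?_ ?_ ?_
    fun _ _ => rfl
  · rintro ⟨⟨t, l⟩, i⟩ hx
    simp only [mem_filter, mem_product, mem_Icc] at hx ⊢
    obtain ⟨⟨⟨⟨ht1, -⟩, hl1, -⟩, hi1, -⟩, hdvd, -, hit⟩ := hx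
    have hrl : r * (i * r ^ (l - 1)) = i * r ^ l := by
      conv_rhs => rw [← Nat.sub_add_cancel hl1]
      ring
    have := Nat.le_of_dvd ht1 hdvd
    have := Nat.one_le_pow (l - 1) r (by omega)
    have := Nat.pow_le_pow_right (by omega : 0 < r) (Nat.sub_le l 1)
    refine ⟨⟨⟨by nlinarith, by nlinarith⟩, by nlinarith, hit⟩, ?_⟩
    rw [hrl]
    exact mul_dvd_mul_left i hdvd
  · rintro ⟨k, u⟩ hy
    simp only [mem_filter, mem_product, mem_Icc] at hy ⊢
    obtain ⟨⟨⟨hk1, hkN⟩, hu1, huN⟩, hdvd⟩ := hy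
    have hit : k.divMaxPow r * (u / k.divMaxPow r) = u :=
      Nat.mul_div_cancel' ((divMaxPow_dvd_self k).trans ((dvd_mul_left k r).trans hdvd))
    obtain ⟨hi1, ht1⟩ := CanonicallyOrderedAdd.mul_pos.1 (hit ▸ hu1 : 0 < _)
    have hik := Nat.le_of_dvd hk1 (divMaxPow_dvd_self (r := r) k)
    have htu := Nat.div_le_self u (k.divMaxPow r)
    have hl := pow_succ_padicValNat_dvd_div_divMaxPow (by omega : k ≠ 0) hdvd
    have := Nat.le_of_dvd ht1 hl
    have := Nat.lt_pow_self (n := padicValNat r k + 1) hr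
    exact ⟨⟨⟨⟨by omega, by omega⟩, by omega, by omega⟩, by omega, by omega⟩, hl,
      Nat.not_dvd_divMaxPow hr (by omega), by omega⟩
  · rintro ⟨⟨t, l⟩, i⟩ hx
    simp only [mem_filter, mem_product, mem_Icc] at hx
    obtain ⟨⟨⟨-, hl1, -⟩, hi1, -⟩, -, hri, -⟩ := hx
    rw [mul_comm i, divMaxPow_pow_mul_of_not_dvd (by omega) hri,
      padicValNat_pow_mul_of_not_dvd hr hri, Nat.sub_add_cancel hl1,
      mul_div_cancel_left₀ t (by omega)]
  · rintro ⟨k, u⟩ hy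
    simp only [mem_filter, mem_product] at hy
    exact Prod.ext (Nat.divMaxPow_mul_pow_padicValNat r k)
      (Nat.mul_div_cancel' ((divMaxPow_dvd_self k).trans ((dvd_mul_left k r).trans hy.2)))

lemma sum_sum_filter_pow_dvd_eq (hr : 1 < r) (N : ℕ) (G : ℕ → M) :
    ∑ t ∈ Icc 1 N, ∑ l ∈ Icc 1 N with r ^ l ∣ t, ∑ i ∈ Icc 1 N with ¬ r ∣ i ∧ i * t ≤ N,
        G (i * t) =
      ∑ k ∈ Icc 1 N, ∑ u ∈ Icc 1 N with r * k ∣ u, G u := by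
  rw [← sum_finset_product' ((Icc 1 N ×ˢ Icc 1 N).filter fun x => r ^ x.2 ∣ x.1) _ _
      fun _ => by simp only [mem_filter, mem_product]; tauto,
    ← sum_finset_product' (((Icc 1 N ×ˢ Icc 1 N) ×ˢ Icc 1 N).filter
        fun x => r ^ x.1.2 ∣ x.1.1 ∧ ¬ r ∣ x.2 ∧ x.2 * x.1.1 ≤ N) _ _
      fun _ => by simp only [mem_filter, mem_product]; tauto,
    ← sum_finset_product' ((Icc 1 N ×ˢ Icc 1 N).filter fun x => r * x.1 ∣ x.2) _ _
      fun _ => by simp only [mem_filter, mem_product, and_assoc]]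
  exact sum_filter_triple_eq_sum_filter_pair hr N G

end RAdic

lemma coeff_mul_eq_of_X_pow_dvd_sub_one {R : Type*} [CommRing R] {m : ℕ} {f g : R⟦X⟧}
    (hg : X ^ (m + 1) ∣ g - 1) : coeff m (f * g) = coeff m f := by
  obtain ⟨h, hh⟩ := hg
  rw [show f * g = f + X ^ (m + 1) * (f * h) by linear_combination f * hh, map_add,
    coeff_X_pow_mul', if_neg (by omega), add_zero]

lemma dvd_prod_sub_one {R ι : Type*} [CommRing R] {a : R} (s : Finset ι) (g : ι → R)
    (hg : ∀ i ∈ s, a ∣ g i - 1) : a ∣ ∏ i ∈ s, g i - 1 := by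
  simp_rw [← Ideal.mem_span_singleton, ← Ideal.Quotient.eq, map_prod] at hg ⊢
  rw [prod_congr rfl hg, map_one]
  simp

section GeometricSeries

variable {k : Type*} [Field k] {d : ℕ}

lemma X_pow_dvd_inv_one_sub_X_pow_sub_one (hd : d ≠ 0) :
    (X : k⟦X⟧) ^ d ∣ (1 - X ^ d)⁻¹ - 1 :=
  ⟨(1 - X ^ d)⁻¹, by
    linear_combination PowerSeries.inv_mul_cancel (1 - (X : k⟦X⟧) ^ d) (by simp [hd])⟩

lemma inv_one_sub_X_pow_eq_tsum [TopologicalSpace k] [IsTopologicalRing k] [T2Space k]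
    (hd : d ≠ 0) : (1 - (X : k⟦X⟧) ^ d)⁻¹ = ∑' j : ℕ, X ^ (d * j) := by
  rw [eq_comm, PowerSeries.eq_inv_iff_mul_eq_one (by simp [hd])]
  simp_rw [pow_mul]
  exact WithPiTopology.tsum_pow_mul_one_sub_of_constantCoeff_eq_zero (by simp [hd])

lemma inv_one_sub_X_pow_eq_mk (hd : d ≠ 0) :
    (1 - (X : k⟦X⟧) ^ d)⁻¹ = mk fun n => if d ∣ n then 1 else 0 := by
  rw [eq_comm, PowerSeries.eq_inv_iff_mul_eq_one (by simp [hd])]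
  ext n
  rw [mul_sub, mul_one, map_sub, coeff_mul_X_pow', coeff_mk, coeff_mk, coeff_one]
  rcases Nat.eq_zero_or_pos n with rfl | hn
  · simp [hd]
  by_cases hdn : d ≤ n
  · have key : d ∣ n - d ↔ d ∣ n := Nat.dvd_sub_iff_left hdn dvd_rfl
    simp [hdn, hn.ne', key]
  · have key : ¬ d ∣ n := fun h => hdn (Nat.le_of_dvd hn h)
    simp [hdn, hn.ne', key]

lemma coeff_X_pow_mul_inv_one_sub_X_pow (hd : d ≠ 0) (u : ℕ) :
    coeff u ((X : k⟦X⟧) ^ d * (1 - X ^ d)⁻¹) = if d ∣ u ∧ u ≠ 0 then 1 else 0 := by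
  rw [inv_one_sub_X_pow_eq_mk hd, coeff_X_pow_mul', coeff_mk]
  by_cases hdu : d ≤ u
  · have key : d ∣ u - d ↔ d ∣ u := Nat.dvd_sub_iff_left hdu dvd_rfl
    simp [hdu, key, show u ≠ 0 by omega]
  · rw [if_neg hdu, if_neg fun h => hdu (Nat.le_of_dvd (Nat.pos_of_ne_zero h.2) h.1)]

end GeometricSeries

lemma coeff_PhiTrunc {r m N : ℕ} (hmN : m ≤ N) : coeff m (PhiTrunc r N) = #(CP r m) := by
  let g : ℕ → ℚ⟦X⟧ := fun k => if ¬ r ∣ k then (1 - X ^ k)⁻¹ else 1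
  -- `Φ_r` is Mathlib's infinite product of the `g (i + 1)`, whose factors with `i ≥ N` are
  -- `1` modulo `X ^ (m + 1)`; so the truncation already has the limiting `m`-th coefficient.
  have hprod : HasProd (fun i => g (i + 1)) (mk fun n => (#(CP r n) : ℚ)) := by
    have hfun : (fun i => g (i + 1)) =
        fun i => if ¬ r ∣ i + 1 then ∑' j, X ^ ((i + 1) * j) else 1 :=
      funext fun i => by simp only [g, inv_one_sub_X_pow_eq_tsum (Nat.succ_ne_zero i)]
    rw [hfun]
    exact Nat.Partition.hasProd_powerSeriesMk_card_restricted ℚ (¬ r ∣ ·)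
  have hPhi : PhiTrunc r N = ∏ i ∈ range N, g (i + 1) := by
    rw [range_eq_Ico, prod_Ico_add' g 0 N 1, zero_add, Ico_add_one_right_eq_Icc, PhiTrunc]
  have hg : ∀ i ∉ range N, X ^ (m + 1) ∣ g (i + 1) - 1 := by
    intro i hi
    simp only [mem_range, not_lt] at hi
    by_cases hri : r ∣ i + 1
    · simp [g, hri]
    · simp only [g, if_pos hri]
      exact (pow_dvd_pow X (by omega : m + 1 ≤ i + 1)).trans
        (X_pow_dvd_inv_one_sub_X_pow_sub_one i.succ_ne_zero)
  have hconst : ∀ s ≥ range N, coeff m (∏ i ∈ s, g (i + 1)) = coeff m (PhiTrunc r N) := by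
    intro s hs
    rw [← prod_sdiff hs, mul_comm, hPhi, coeff_mul_eq_of_X_pow_dvd_sub_one
      (dvd_prod_sub_one _ _ fun i hi => hg i (mem_sdiff.1 hi).2)]
  have hlim := (WithPiTopology.tendsto_iff_coeff_tendsto _ _ _ _).1 hprod m
  rw [coeff_mk] at hlim
  exact tendsto_nhds_unique (tendsto_atTop_of_eventually_const hconst) hlim

lemma coeff_PhiTrunc_mul_X_pow_mul_inv {r d : ℕ} (hd : d ≠ 0) (n : ℕ) :
    coeff n (PhiTrunc r n * (X ^ d * (1 - X ^ d)⁻¹)) =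
      ∑ u ∈ Icc 1 n with d ∣ u, (#(CP r (n - u)) : ℚ) := by
  rw [mul_comm, coeff_mul, Nat.sum_antidiagonal_eq_sum_range_succ
    (fun a b => coeff a ((X : ℚ⟦X⟧) ^ d * (1 - X ^ d)⁻¹) * coeff b (PhiTrunc r n))]
  have hfilter : (Icc 1 n).filter (d ∣ ·) = (range (n + 1)).filter (fun u => d ∣ u ∧ u ≠ 0) := by
    ext u; simp only [mem_filter, mem_Icc, mem_range]; omega
  rw [hfilter, sum_filter]
  refine sum_congr rfl fun u _ => ?_
  rw [coeff_X_pow_mul_inv_one_sub_X_pow hd, coeff_PhiTrunc (Nat.sub_le n u), ite_mul, one_mul,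
    zero_mul]

lemma sum_parts_sub_replicate_add {n i t : ℕ} {ρ : n.Partition} (h : t ≤ ρ.parts.count i) :
    (ρ.parts - Multiset.replicate t i).sum + i * t = n := by
  have := congrArg Multiset.sum (tsub_add_cancel_of_le (Multiset.le_count_iff_replicate_le.1 h))
  rwa [Multiset.sum_add, Multiset.sum_replicate, smul_eq_mul, ρ.parts_sum, mul_comm t] at this

lemma card_filter_le_count_CP {r n i t : ℕ} (hi : ¬ r ∣ i) (hit : i * t ≤ n) :
    #{ρ ∈ CP r n | t ≤ ρ.parts.count i} = #(CP r (n - i * t)) := by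
  have hi0 : 0 < i := Nat.pos_of_ne_zero (ne_zero_of_not_dvd hi)
  refine card_bij'
    (fun ρ hρ => ⟨ρ.parts - Multiset.replicate t i,
      fun h => ρ.parts_pos (Multiset.mem_of_le (Multiset.sub_le_self _ _) h),
      by have := sum_parts_sub_replicate_add (mem_filter.1 hρ).2; omega⟩)
    (fun σ _ => ⟨σ.parts + Multiset.replicate t i,
      fun h => (Multiset.mem_add.1 h).elim σ.parts_pos
        fun h => Multiset.eq_of_mem_replicate h ▸ hi0,
      by rw [Multiset.sum_add, Multiset.sum_replicate, smul_eq_mul, σ.parts_sum, mul_comm t i,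
        Nat.sub_add_cancel hit]⟩)
    ?_ ?_ ?_ ?_
  · intro ρ hρ
    simp only [CP, mem_filter, mem_univ, true_and] at hρ ⊢
    exact fun p hp => hρ.1 p (Multiset.mem_of_le (Multiset.sub_le_self _ _) hp)
  · intro σ hσ
    simp only [CP, mem_filter, mem_univ, true_and, Multiset.mem_add, Multiset.count_add,
      Multiset.count_replicate_self] at hσ ⊢
    exact ⟨fun p hp => hp.elim (hσ p) fun hp => Multiset.eq_of_mem_replicate hp ▸ hi, by omega⟩
  · intro ρ hρ
    exact Nat.Partition.ext (tsub_add_cancel_of_le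
      (Multiset.le_count_iff_replicate_le.1 (mem_filter.1 hρ).2))
  · intro σ _
    exact Nat.Partition.ext (add_tsub_cancel_right _ _)

lemma card_filter_le_count_CP_eq_ite {r n i t : ℕ} (ht : t ≠ 0) :
    #{ρ ∈ CP r n | t ≤ ρ.parts.count i} =
      if ¬ r ∣ i ∧ i * t ≤ n then #(CP r (n - i * t)) else 0 := by
  split_ifs with h
  · exact card_filter_le_count_CP h.1 h.2
  · refine card_eq_zero.2 (filter_eq_empty_iff.2 fun ρ hρ hcount => h ⟨fun hri => ?_, ?_⟩)
    · exact (mem_filter.1 hρ).2 i (Multiset.count_pos.1 (by omega)) hri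
    · have := sum_parts_sub_replicate_add hcount; omega

lemma numGE_eq_card {n t : ℕ} (ρ : n.Partition) (ht : t ≠ 0) :
    numGE ρ t = #{i ∈ Icc 1 n | t ≤ ρ.parts.count i} := by
  rw [numGE]
  congr 1
  ext i
  simp only [mem_filter, Multiset.mem_toFinset, mem_Icc]
  constructor
  · rintro ⟨hi, h⟩
    exact ⟨⟨ρ.parts_pos hi, ρ.le_of_mem_parts hi⟩, h⟩
  · rintro ⟨-, h⟩
    exact ⟨Multiset.count_pos.1 (by omega), h⟩

lemma W_eq_sum {r t n : ℕ} (ht : t ≠ 0) :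
    W r t n = ∑ i ∈ Icc 1 n with ¬ r ∣ i ∧ i * t ≤ n, #(CP r (n - i * t)) := by
  simp_rw [W, numGE_eq_card _ ht, card_filter]
  rw [sum_comm, sum_filter]
  simp_rw [← card_filter, card_filter_le_count_CP_eq_ite ht]

lemma W_eq_zero {r t n : ℕ} (h : n < t) : W r t n = 0 := by
  rw [W_eq_sum (by omega : t ≠ 0), filter_eq_empty_iff.2, sum_empty]
  intro i hi hit
  simp only [mem_Icc] at hi
  nlinarith [hit.2]

lemma cExp_eq_sum {r : ℕ} (hr : 1 < r) (n : ℕ) :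
    cExp r n = ∑ t ∈ Icc 1 n, padicValNat r t * W r t n := by
  have hterm : ∀ j k, (if ¬ r ∣ j then k * W r (r ^ k * j) n else 0) =
      if ¬ r ∣ j ∧ r ^ k * j ≤ n then k * W r (r ^ k * j) n else 0 := by
    intro j k
    by_cases h : r ^ k * j ≤ n
    · simp [h]
    · simp [h, W_eq_zero (not_le.1 h)]
  have hbound : ∀ j k, ¬ r ∣ j ∧ r ^ k * j ≤ n → j < n + 1 ∧ k < n + 1 := by
    rintro j k ⟨hj, hle⟩
    have := Nat.pos_of_ne_zero (ne_zero_of_not_dvd hj)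
    have := Nat.lt_pow_self (n := k) hr
    constructor <;> nlinarith
  rw [cExp]
  simp_rw [hterm]
  rw [tsum_eq_sum (s := range (n + 1)) fun j hj => ?_]
  · rw [← sum_filter_pow_mul_eq_sum_Icc hr n fun t k => k * W r t n, sum_filter, sum_product]
    refine sum_congr rfl fun j _ => tsum_eq_sum fun k hk => if_neg fun h => ?_
    exact hk (mem_range.2 (hbound j k h).2)
  · refine (tsum_congr fun k => if_neg fun h => ?_).trans tsum_zero
    exact hj (mem_range.2 (hbound j k h).1)

/-- `Σ_n c_{r,n} q^n = Φ_r(q) · Σ_{k ≥ 1} q^{rk}/(1-q^{rk})`, stated coefficient-wise (the sum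
over `k` is truncated at `k ≤ n`, which does not affect the `n`-th coefficient). -/
theorem genFun_cExp (r : ℕ) (hr : 2 ≤ r) (n : ℕ) :
    PowerSeries.coeff (R := ℚ) n
      (PhiTrunc r n * ∑ k ∈ Finset.Icc 1 n,
        (PowerSeries.X : PowerSeries ℚ) ^ (r * k) *
          (1 - (PowerSeries.X : PowerSeries ℚ) ^ (r * k))⁻¹) = cExp r n := by
  have hr1 : 1 < r := hr
  rw [mul_sum, map_sum, sum_congr rfl fun k hk => coeff_PhiTrunc_mul_X_pow_mul_inv
    (Nat.mul_ne_zero (by omega) (by simp only [mem_Icc] at hk; omega)) n,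
    ← sum_sum_filter_pow_dvd_eq hr1, cExp_eq_sum hr1]
  push_cast
  refine sum_congr rfl fun t ht => ?_
  rw [sum_const, card_filter_pow_dvd hr1 ht, W_eq_sum (by simp only [mem_Icc] at ht; omega),
    nsmul_eq_mul, Nat.cast_sum]
end

section
/- For pairwise coprime integers r_1, ..., r_m ≥ 2, the number of partitions of n in which no part is divisible by r_2, ..., r_m and each part has multiplicity less than r_1 equals the number of partitions of n in which no part is divisible by any of r_1, ..., r_m. -/
open Nat Finset
open scoped Classical

/-!
Glaisher's theorem relative to a set `P` of parts that is stable under `k ↦ k * m`: as power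
series, both sides equal `∏_{k ∈ P} (1 - X^{km}) / (1 - X^k)`. For the partitions with
multiplicities `< m` this holds factor by factor; for those with parts in `P` not divisible by
`m`, it holds because `k ↦ k * m` maps `P` bijectively onto the multiples of `m` in `P`, so the
numerators cancel exactly the denominators with `m ∣ k`. Coprimality makes the set of integers
not divisible by any `r i` with `i ≠ 0` such a `P` for `m = r 0`.
-/

namespace PowerSeries.WithPiTopology

variable {R : Type*} [CommRing R] [TopologicalSpace R]

theorem multipliable_ite_one_sub_X_pow (q : ℕ → Prop) [DecidablePred q] :
    Multipliable fun i ↦ if q i then (1 : R⟦X⟧) - X ^ (i + 1) else 1 := by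
  nontriviality R
  have hord : Filter.Tendsto (fun i ↦ (if q i then -(X : R⟦X⟧) ^ (i + 1) else 0).order)
      Filter.atTop (nhds ⊤) := by
    refine ENat.tendsto_nhds_top_iff_natCast_lt.mpr fun n ↦
      Filter.eventually_atTop.mpr ⟨n, fun i hi ↦ ?_⟩
    split_ifs
    · rw [order_neg, order_X_pow]
      exact_mod_cast Nat.lt_add_one_iff.mpr hi
    · simp
  refine (multipliable_one_add_of_tendsto_order_atTop_nhds_top R hord).congr fun i ↦ ?_
  split_ifs <;> simp [sub_eq_add_neg]

theorem geom_sum_eq_tsum_pow_mul_one_sub_pow [IsTopologicalRing R] [T2Space R] {f : R⟦X⟧}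
    (hf : f.constantCoeff = 0) (m : ℕ) :
    ∑ j ∈ range m, f ^ j = (∑' j, f ^ j) * (1 - f ^ m) := by
  rw [← geom_sum_mul_neg, mul_comm _ (1 - f), ← mul_assoc,
    tsum_pow_mul_one_sub_of_constantCoeff_eq_zero hf, one_mul]

end PowerSeries.WithPiTopology

namespace Nat.Partition

open PowerSeries PowerSeries.WithPiTopology

variable {R : Type*} [TopologicalSpace R] [T2Space R]

theorem hasProd_powerSeriesMk_card_restricted_inter_countRestricted [CommSemiring R]
    [IsTopologicalSemiring R] (p : ℕ → Prop) [DecidablePred p] {m : ℕ} (hm : 0 < m) :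
    HasProd (fun i ↦ if p (i + 1) then ∑ j ∈ range m, X ^ ((i + 1) * j) else 1)
      (PowerSeries.mk fun n ↦ (#(restricted n p ∩ countRestricted n m) : R)) := by
  nontriviality R using Subsingleton.eq_one (α := R⟦X⟧)
  convert! hasProd_genFun (fun i c ↦ if p i ∧ c < m then (1 : R) else 0) using 1
  · ext1 i
    split_ifs with hi
    · rw [sum_range_eq_add_Ico _ hm, sum_Ico_eq_sum_range]
      congrm $(by simp) + ?_
      trans ∑ k ∈ range (m - 1), (if p (i + 1) ∧ k + 1 < m then (1 : R) else 0) •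
        X ^ ((i + 1) * (k + 1))
      · refine sum_congr rfl fun b hb ↦ ?_
        rw [add_comm 1 b]
        have : b + 1 < m := by grind
        simp [hi, this]
      · exact (tsum_eq_sum fun b hb ↦ smul_eq_zero_of_left (by simpa [hi] using hb) _).symm
    · simp [hi]
  · simp only [restricted, countRestricted, ← filter_and]
    simp_rw [genFun, card_filter, Finsupp.prod, prod_boole]
    simp [forall_and]

theorem powerSeriesMk_card_restricted_and_not_dvd_eq_powerSeriesMk_card_restricted_inter_countRestricted
    [CommRing R] [IsTopologicalRing R] (P : ℕ → Prop) [DecidablePred P] {m : ℕ}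
    (hm : 0 < m) (hP : ∀ k, P (k * m) ↔ P k) :
    (PowerSeries.mk fun n ↦ (#(restricted n fun k ↦ P k ∧ ¬ m ∣ k) : R)) =
      PowerSeries.mk fun n ↦ (#(restricted n P ∩ countRestricted n m) : R) := by
  have hA := hasProd_powerSeriesMk_card_restricted R fun k ↦ P k ∧ ¬ m ∣ k
  have hB := hasProd_powerSeriesMk_card_restricted_inter_countRestricted (R := R) P hm
  have hC := hasProd_powerSeriesMk_card_restricted R fun k ↦ P k ∧ m ∣ k
  obtain ⟨D, hD⟩ := multipliable_ite_one_sub_X_pow (R := R) fun i ↦ P (i + 1) ∧ m ∣ i + 1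
  have hCD : _ * D = 1 := (hC.mul hD).unique <| by
    convert hasProd_one with i
    split_ifs <;> simp_all [pow_mul, tsum_pow_mul_one_sub_of_constantCoeff_eq_zero]
  -- `D = ∏_{k ∈ P, m ∣ k} (1 - X^k)`; reindex it along `k ↦ k * m`, using `hP`.
  have hD' : HasProd (fun i ↦ if P (i + 1) then 1 - X ^ ((i + 1) * m) else 1) D := by
    have hinj : Function.Injective fun i ↦ (i + 1) * m - 1 := fun a b h ↦ by
      have ha : 0 < (a + 1) * m := by positivity
      have hb : 0 < (b + 1) * m := by positivity
      simpa using Nat.eq_of_mul_eq_mul_right hm (show (a + 1) * m = (b + 1) * m by grind)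
    refine ((hinj.hasProd_iff fun k hk ↦ if_neg ?_).mpr hD).congr_fun fun i ↦ ?_
    · rintro ⟨-, _ | c, hc⟩
      · simp at hc
      · exact hk ⟨c, by simp [mul_comm, ← hc]⟩
    · have : (i + 1) * m - 1 + 1 = (i + 1) * m := Nat.sub_add_cancel (Nat.mul_pos i.succ_pos hm)
      simp [this, hP]
  have hACD : HasProd (fun i ↦ if P (i + 1) then ∑ j ∈ range m, X ^ ((i + 1) * j) else 1)
      (_ * _ * D) := ((hA.mul hC).mul hD').congr_fun fun i ↦ by
    by_cases hPi : P (i + 1) <;> by_cases hmi : m ∣ i + 1 <;>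
      simp [hPi, hmi, pow_mul, geom_sum_eq_tsum_pow_mul_one_sub_pow]
  rw [hB.unique hACD, mul_assoc, hCD, mul_one]

theorem card_restricted_and_not_dvd_eq_card_restricted_inter_countRestricted (n : ℕ)
    (P : ℕ → Prop) [DecidablePred P] {m : ℕ} (hm : 0 < m) (hP : ∀ k, P (k * m) ↔ P k) :
    #(restricted n fun k ↦ P k ∧ ¬ m ∣ k) = #(restricted n P ∩ countRestricted n m) := by
  simpa using PowerSeries.ext_iff.mp
    (powerSeriesMk_card_restricted_and_not_dvd_eq_powerSeriesMk_card_restricted_inter_countRestricted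
      (R := ℤ) P hm hP) n

end Nat.Partition

/-- For pairwise coprime `r 0, r 1, …, r m ≥ 2`, the number of partitions of `n` with no part
divisible by `r 1, …, r m` and every part of multiplicity `< r 0` equals the number of
partitions of `n` with no part divisible by any of `r 0, …, r m`. -/
theorem card_regular_eq_card_classRegular (m : ℕ) (r : Fin (m + 1) → ℕ)
    (hr : ∀ i, 2 ≤ r i) (hcop : ∀ i j, i ≠ j → Nat.Coprime (r i) (r j)) (n : ℕ) :
    (Finset.univ.filter (fun l : n.Partition =>
        (∀ p ∈ l.parts, ∀ i : Fin (m + 1), i ≠ 0 → ¬ r i ∣ p) ∧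
        ∀ i, l.parts.count i < r 0)).card =
    (Finset.univ.filter (fun l : n.Partition =>
        ∀ p ∈ l.parts, ∀ i : Fin (m + 1), ¬ r i ∣ p)).card := by
  set P : ℕ → Prop := fun k ↦ ∀ i : Fin (m + 1), i ≠ 0 → ¬ r i ∣ k
  have hr0 : 0 < r 0 := Nat.zero_lt_of_lt (hr 0)
  have hP (k : ℕ) : P (k * r 0) ↔ P k :=
    forall₂_congr fun i hi ↦ not_congr (hcop i 0 hi).dvd_mul_right
  have hregular : univ.filter (fun l : n.Partition =>
      (∀ p ∈ l.parts, P p) ∧ ∀ i, l.parts.count i < r 0) =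
      Partition.restricted n P ∩ Partition.countRestricted n (r 0) := by
    simp only [Partition.restricted, Partition.countRestricted, ← filter_and]
    refine filter_congr fun l _ ↦
      and_congr_right fun _ ↦ ⟨fun h i _ ↦ h i, fun h i ↦ ?_⟩
    by_cases hi : i ∈ l.parts
    · exact h i hi
    · simpa [Multiset.count_eq_zero_of_notMem hi] using hr0
  have hclassRegular : univ.filter (fun l : n.Partition => ∀ p ∈ l.parts, ∀ i, ¬ r i ∣ p) =
      Partition.restricted n fun k ↦ P k ∧ ¬ r 0 ∣ k :=
    filter_congr fun l _ ↦ forall₂_congr fun p _ ↦ ⟨fun h ↦ ⟨fun i _ ↦ h i, h 0⟩,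
      fun ⟨h, h0⟩ i ↦ if hi : i = 0 then hi ▸ h0 else h i hi⟩
  rw [hregular, hclassRegular,
    Partition.card_restricted_and_not_dvd_eq_card_restricted_inter_countRestricted n P hr0 hP]
end

section
/- For coprime integers r, s ≥ 2, the number of partitions of n with no part divisible by s and each part occurring fewer than r times equals the number of partitions of n with no part divisible by r and each part occurring fewer than s times. -/
open Nat Finset
open scoped Classical

/-!
The generating function of partitions with no part divisible by `s` and all multiplicities
below `r` is `∏_{s ∤ k} (1 - X ^ (r * k)) / (1 - X ^ k)`. Since `r` and `s` are coprime,
`k ↦ r * k` maps the `k` with `s ∤ k` bijectively onto the multiples of `r` with the same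
property, so the numerator is `∏_{r ∣ k, s ∤ k} (1 - X ^ k)` and the quotient is
`1 / ∏_{r ∤ k, s ∤ k} (1 - X ^ k)`, which is symmetric in `r` and `s`.
-/

open PowerSeries PowerSeries.WithPiTopology

namespace Nat.Partition

noncomputable def regularCountRestricted (n s r : ℕ) : Finset n.Partition :=
  {l | (∀ p ∈ l.parts, ¬ s ∣ p) ∧ ∀ i, l.parts.count i < r}

theorem hasProd_powerSeriesMk_card_regularCountRestricted (R : Type*) [CommSemiring R]
    [TopologicalSpace R] [T2Space R] {r : ℕ} (hr : 0 < r) (s : ℕ) :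
    HasProd (fun i ↦ if ¬ s ∣ i + 1 then ∑ j ∈ range r, X ^ ((i + 1) * j) else 1)
      (PowerSeries.mk fun n ↦ (#(regularCountRestricted n s r) : R)) := by
  convert! hasProd_genFun (fun i c ↦ if ¬ s ∣ i ∧ c < r then (1 : R) else 0) using 1
  · ext1 i
    split_ifs with h
    · simp [h]
    · have hsupp (j : ℕ) (hj : j ∉ range (r - 1)) :
          (if ¬ s ∣ i + 1 ∧ j + 1 < r then (1 : R) else 0) •
            (X : R⟦X⟧) ^ ((i + 1) * (j + 1)) = 0 := by
        rw [if_neg fun hc ↦ hj (mem_range.mpr (by have := hc.2; omega)), zero_smul]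
      rw [tsum_eq_sum hsupp, sum_range_eq_add_Ico _ hr, sum_Ico_eq_sum_range]
      refine congrArg₂ _ (by simp) (sum_congr rfl fun j hj ↦ ?_)
      rw [mem_range] at hj
      simp [h, add_comm 1 j, show j + 1 < r by omega]
  · simp_rw [genFun, regularCountRestricted, card_filter, Finsupp.prod, prod_boole,
      Multiset.toFinsupp_support, Multiset.toFinsupp_apply, Multiset.mem_toFinset]
    refine congrArg PowerSeries.mk (funext fun n ↦ ?_)
    push_cast
    refine sum_congr rfl fun l _ ↦ ?_
    congr! 1
    constructor
    · exact fun h i hi ↦ ⟨h.1 i hi, h.2 i⟩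
    · refine fun h ↦ ⟨fun i hi ↦ (h i hi).1, fun i ↦ ?_⟩
      by_cases hi : i ∈ l.parts
      · exact (h i hi).2
      · simpa [Multiset.count_eq_zero_of_notMem hi]

section ProdOneSubXPow

variable {R : Type*} [CommRing R] [TopologicalSpace R]

noncomputable def prodOneSubXPow (p : ℕ → Prop) [DecidablePred p] : R⟦X⟧ :=
  ∏' i, if p (i + 1) then 1 - X ^ (i + 1) else 1

theorem multipliable_ite_one_sub_X_pow (p : ℕ → Prop) [DecidablePred p] :
    Multipliable fun i ↦ if p (i + 1) then (1 : R⟦X⟧) - X ^ (i + 1) else 1 := by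
  nontriviality R
  have h (i : ℕ) : (if p (i + 1) then (1 : R⟦X⟧) - X ^ (i + 1) else 1) =
      1 + if p (i + 1) then -X ^ (i + 1) else 0 := by
    split_ifs <;> ring
  simp_rw [h]
  apply multipliable_one_add_of_tendsto_order_atTop_nhds_top
  refine ENat.tendsto_nhds_top_iff_natCast_lt.mpr fun n ↦ Filter.eventually_atTop.mpr ⟨n, ?_⟩
  intro m hm
  split_ifs
  · rw [order_neg, order_X_pow]
    exact_mod_cast Nat.lt_add_one_iff.mpr hm
  · simp

theorem prodOneSubXPow_congr {p q : ℕ → Prop} [DecidablePred p] [DecidablePred q]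
    (h : ∀ k, p k ↔ q k) : (prodOneSubXPow p : R⟦X⟧) = prodOneSubXPow q := by
  simp only [prodOneSubXPow, h]

theorem prodOneSubXPow_ne_zero [T2Space R] [Nontrivial R] (p : ℕ → Prop) [DecidablePred p] :
    prodOneSubXPow p ≠ (0 : R⟦X⟧) := by
  intro h
  have := congrArg constantCoeff h
  rw [prodOneSubXPow, (multipliable_ite_one_sub_X_pow p).map_tprod _ (continuous_constantCoeff R)]
    at this
  simp [apply_ite] at this

theorem prodOneSubXPow_and_mul_and_not [T2Space R] [IsTopologicalSemiring R] (p q : ℕ → Prop)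
    [DecidablePred p] [DecidablePred q] :
    prodOneSubXPow (fun k ↦ q k ∧ p k) * prodOneSubXPow (fun k ↦ ¬ q k ∧ p k) =
      (prodOneSubXPow p : R⟦X⟧) := by
  rw [prodOneSubXPow, prodOneSubXPow, prodOneSubXPow,
    ← (multipliable_ite_one_sub_X_pow fun k ↦ q k ∧ p k).tprod_mul
      (multipliable_ite_one_sub_X_pow fun k ↦ ¬ q k ∧ p k)]
  refine tprod_congr fun i ↦ ?_
  by_cases hp : p (i + 1) <;> by_cases hq : q (i + 1) <;> simp [hp, hq]

theorem tprod_ite_one_sub_X_pow_mul {r : ℕ} (hr : 0 < r) (p : ℕ → Prop) [DecidablePred p] :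
    ∏' i, (if p (i + 1) then 1 - X ^ ((i + 1) * r) else 1) =
      (prodOneSubXPow (fun k ↦ r ∣ k ∧ p (k / r)) : R⟦X⟧) := by
  have hinj : Function.Injective fun i ↦ (i + 1) * r - 1 := by
    intro a b h
    have := Nat.eq_of_mul_eq_mul_right hr (Nat.sub_one_cancel (by positivity) (by positivity) h)
    omega
  rw [prodOneSubXPow]
  refine .trans (tprod_congr fun i ↦ ?_) (hinj.tprod_eq (f := fun k ↦
    if r ∣ k + 1 ∧ p ((k + 1) / r) then (1 : R⟦X⟧) - X ^ (k + 1) else 1) ?_)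
  · have : (i + 1) * r - 1 + 1 = (i + 1) * r := Nat.sub_add_cancel (Nat.mul_pos i.succ_pos hr)
    simp [this, Nat.mul_div_cancel _ hr]
  · intro k hk
    obtain ⟨j, hj⟩ : r ∣ k + 1 := by
      by_contra h
      exact hk (by simp [h])
    exact ⟨j - 1, by grind⟩

end ProdOneSubXPow

variable {R : Type*} [CommRing R] [TopologicalSpace R] [T2Space R] [IsTopologicalSemiring R]

theorem powerSeriesMk_card_regularCountRestricted_mul_prodOneSubXPow {r s : ℕ} (hr : 0 < r)
    (hrs : r.Coprime s) :
    (PowerSeries.mk fun n ↦ (#(regularCountRestricted n s r) : R)) *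
        prodOneSubXPow (fun k ↦ ¬ s ∣ k) =
      prodOneSubXPow (fun k ↦ r ∣ k ∧ ¬ s ∣ k) := by
  have hF := hasProd_powerSeriesMk_card_regularCountRestricted R hr s
  have hfactor (i : ℕ) :
      (if ¬ s ∣ i + 1 then ∑ j ∈ range r, X ^ ((i + 1) * j) else 1) *
          (if ¬ s ∣ i + 1 then 1 - X ^ (i + 1) else 1) =
        if ¬ s ∣ i + 1 then (1 : R⟦X⟧) - X ^ ((i + 1) * r) else 1 := by
    split_ifs
    · rw [one_mul]
    · simp_rw [pow_mul, geom_sum_mul_neg]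
  rw [← hF.tprod_eq, prodOneSubXPow,
    ← hF.multipliable.tprod_mul (multipliable_ite_one_sub_X_pow fun k ↦ ¬ s ∣ k),
    tprod_congr hfactor, tprod_ite_one_sub_X_pow_mul hr (fun k ↦ ¬ s ∣ k)]
  refine prodOneSubXPow_congr fun k ↦ and_congr_right fun ⟨m, hm⟩ ↦ ?_
  rw [hm, Nat.mul_div_cancel_left _ hr, hrs.symm.dvd_mul_left]

theorem powerSeriesMk_card_regularCountRestricted_mul_prodOneSubXPow_eq_one [IsDomain R]
    {r s : ℕ} (hr : 0 < r) (hrs : r.Coprime s) :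
    (PowerSeries.mk fun n ↦ (#(regularCountRestricted n s r) : R)) *
        prodOneSubXPow (fun k ↦ ¬ r ∣ k ∧ ¬ s ∣ k) = 1 := by
  refine mul_right_cancel₀ (prodOneSubXPow_ne_zero fun k ↦ ¬ s ∣ k) ?_
  rw [mul_right_comm, powerSeriesMk_card_regularCountRestricted_mul_prodOneSubXPow hr hrs,
    one_mul]
  exact prodOneSubXPow_and_mul_and_not _ _

theorem card_regularCountRestricted_comm {r s : ℕ} (hr : 0 < r) (hs : 0 < s)
    (hrs : r.Coprime s) (n : ℕ) :
    #(regularCountRestricted n s r) = #(regularCountRestricted n r s) := by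
  have inv_rs :=
    powerSeriesMk_card_regularCountRestricted_mul_prodOneSubXPow_eq_one (R := ℤ) hr hrs
  have inv_sr := powerSeriesMk_card_regularCountRestricted_mul_prodOneSubXPow_eq_one (R := ℤ) hs
    hrs.symm
  rw [prodOneSubXPow_congr fun k ↦ and_comm, ← inv_rs] at inv_sr
  simpa using congrArg (coeff n) (mul_right_cancel₀ (prodOneSubXPow_ne_zero _) inv_sr).symm

end Nat.Partition

/-- For coprime `r, s ≥ 2`, the number of partitions of `n` with no part divisible by `s` and
each part of multiplicity `< r` equals the number with no part divisible by `r` and each part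
of multiplicity `< s`. -/
theorem card_rs_regular_symm (r s : ℕ) (hr : 2 ≤ r) (hs : 2 ≤ s)
    (hcop : Nat.Coprime r s) (n : ℕ) :
    (Finset.univ.filter (fun l : n.Partition =>
        (∀ p ∈ l.parts, ¬ s ∣ p) ∧ ∀ i, l.parts.count i < r)).card =
    (Finset.univ.filter (fun l : n.Partition =>
        (∀ p ∈ l.parts, ¬ r ∣ p) ∧ ∀ i, l.parts.count i < s)).card :=
  Nat.Partition.card_regularCountRestricted_comm (by omega) (by omega) hcop n
end

section
/- For r ≥ 2 and each j ∈ {1, ..., r-1}, X_{r,j,n} - Y_{r,j,n} = c_{r,n}, where X_{r,j,n} is the total number of parts congruent to j mod r over all r-class regular partitions of n, Y_{r,j,n} is the total number of part-sizes with multiplicity ≥ j over all r-regular partitions of n, and c_{r,n} is independent of j with generating function Φ_r(q)·Σ_{k≥1} q^{rk}/(1-q^{rk}). -/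
open Nat Finset PowerSeries
open scoped Classical

/-- The set of `r`-regular partitions of `n`: each part has multiplicity `< r`. -/
noncomputable def RP (r n : ℕ) : Finset (n.Partition) :=
  Finset.univ.filter (fun l => ∀ i, l.parts.count i < r)

/-- `X_{r,j,n}`: total number of parts `≡ j (mod r)` over all `r`-class regular partitions. -/
noncomputable def Xrjn (r j n : ℕ) : ℕ :=
  ∑ ρ ∈ CP r n, Multiset.card (ρ.parts.filter (fun p => p % r = j))

/-- `Y_{r,j,n}`: total number of part-sizes of multiplicity `≥ j` over `r`-regular partitions. -/
noncomputable def Yrjn (r j n : ℕ) : ℕ :=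
  ∑ l ∈ RP r n, (l.parts.toFinset.filter (fun i => j ≤ l.parts.count i)).card

/-- `c_{r,n}`: the coefficient of `q^n` in `Φ_r(q) · Σ_{k ≥ 1} q^{rk}/(1-q^{rk})`, both factors
truncated at index `≤ n` (which does not change the `n`-th coefficient). -/
noncomputable def cCoeff (r n : ℕ) : ℚ :=
  PowerSeries.coeff (R := ℚ) n
    ((∏ k ∈ Finset.Icc 1 n,
        if ¬ r ∣ k then (1 - (PowerSeries.X : PowerSeries ℚ) ^ k)⁻¹ else 1) *
      ∑ k ∈ Finset.Icc 1 n,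
        (PowerSeries.X : PowerSeries ℚ) ^ (r * k) *
          (1 - (PowerSeries.X : PowerSeries ℚ) ^ (r * k))⁻¹)

/-!
Everything is a coefficient of a finite product: if `ψ_i` is a power series in `q^i` whose `c`-th
coefficient is a weight `a_i(c)`, then `[q^n] ∏_{i ≤ n} ψ_i` sums `∏_i a_i(m_i(λ))` over the
partitions `λ` of `n`. Choosing the weights gives
`∑_{ρ ∈ CP} m_k(ρ) = [q^n] Φ_r · q^k/(1-q^k)` and
`#{λ ∈ RP : m_i(λ) ≥ j} = [q^n] Φ_r · (q^{ij} - q^{ir})/(1-q^{ir})`;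
for the second one, Glaisher's theorem says that `∏_{k ≤ n} (1 + q^k + ⋯ + q^{(r-1)k})` and `Φ_r`
agree up to `q^n`. What is left of `X - Y - c` is `[q^n] Φ_r` times
`∑_{k ≡ j} q^k/(1-q^k) - ∑_i q^{ij}/(1-q^{ir})`, which vanishes up to `q^n`: the coefficient of
`q^N` counts the divisors `d` of `N` with `d ≡ j`, resp. `N/d ≡ j (mod r)`, and `d ↦ N/d` matches
them.
-/

theorem Nat.ne_zero_of_mem_Icc_one {i n : ℕ} (h : i ∈ Icc 1 n) : i ≠ 0 :=
  Nat.one_le_iff_ne_zero.mp (mem_Icc.mp h).1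

theorem Nat.le_and_dvd_sub_iff_mod_eq {j r q : ℕ} (hjr : j < r) :
    j ≤ q ∧ r ∣ q - j ↔ q % r = j := by
  constructor
  · rintro ⟨hq, hdvd⟩
    rw [← Nat.modEq_iff_dvd' hq] at hdvd
    exact (Eq.symm hdvd).trans (Nat.mod_eq_of_lt hjr)
  · intro h
    refine ⟨h ▸ Nat.mod_le q r, ?_⟩
    rw [← Nat.modEq_iff_dvd' (h ▸ Nat.mod_le q r)]
    exact (Nat.mod_eq_of_lt hjr).trans h.symm

theorem Nat.sum_Icc_ite_dvd_eq_card_divisors {R : Type*} [Semiring R] {n N : ℕ} (hN0 : 0 < N)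
    (hN : N ≤ n) (P : ℕ → Prop) [DecidablePred P] :
    ∑ d ∈ Icc 1 n, (if d ∣ N ∧ P d then 1 else 0 : R) = #{d ∈ N.divisors | P d} := by
  rw [sum_boole]
  congr 2
  ext d
  simp only [mem_filter, mem_Icc, Nat.mem_divisors]
  constructor
  · rintro ⟨-, hd, hP⟩
    exact ⟨⟨hd, hN0.ne'⟩, hP⟩
  · rintro ⟨⟨hd, -⟩, hP⟩
    exact ⟨⟨Nat.pos_of_dvd_of_pos hd hN0, (Nat.le_of_dvd hN0 hd).trans hN⟩, hd, hP⟩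

theorem Nat.card_filter_divisors_div (N : ℕ) (P : ℕ → Prop) [DecidablePred P] :
    #{d ∈ N.divisors | P (N / d)} = #{d ∈ N.divisors | P d} := by
  simp only [card_filter]
  exact Nat.sum_div_divisors N fun d => if P d then 1 else 0

theorem one_sub_pow_mul_sum_Ico {α : Type*} [CommRing α] (y : α) {j r : ℕ} (h : j ≤ r) :
    (1 - y ^ r) * ∑ c ∈ Ico j r, y ^ c = (y ^ j - y ^ r) * ∑ c ∈ range r, y ^ c := by
  rw [sum_Ico_eq_sub _ h]
  linear_combination (∑ c ∈ range j, y ^ c) * mul_neg_geom_sum y r -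
    (∑ c ∈ range r, y ^ c) * mul_neg_geom_sum y j

namespace Nat.Partition

variable {R : Type*} [CommSemiring R]

theorem mem_Icc_of_mem_parts_s13 {n i : ℕ} {p : n.Partition} (h : i ∈ p.parts) : i ∈ Icc 1 n :=
  mem_Icc.mpr ⟨p.parts_pos h, le_of_mem_parts h⟩

theorem exists_toFinsuppAntidiag_eq {N : ℕ} {s : Finset ℕ} (hs0 : 0 ∉ s) {g : ℕ →₀ ℕ}
    (hg : g ∈ s.finsuppAntidiag N) (hdvd : ∀ i ∈ s, i ∣ g i) :
    ∃ p : N.Partition, p.toFinsuppAntidiag = g := by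
  obtain ⟨hsum, hsupp⟩ := mem_finsuppAntidiag.mp hg
  have hcount (x : ℕ) : (∑ i ∈ s, Multiset.replicate (g i / i) i).count x * x = g x := by
    rw [Multiset.count_sum']
    simp_rw [Multiset.count_replicate, sum_ite_eq']
    split_ifs with hx
    · exact Nat.div_mul_cancel (hdvd x hx)
    · exact (Finsupp.notMem_support_iff.mp fun h => hx (hsupp h)).symm ▸ zero_mul x
  refine ⟨⟨∑ i ∈ s, Multiset.replicate (g i / i) i, fun {x} hx => ?_, ?_⟩, ?_⟩
  · obtain ⟨i, hi, hx⟩ := Multiset.mem_sum.mp hx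
    rw [Multiset.eq_of_mem_replicate hx]
    exact Nat.pos_of_ne_zero fun h => hs0 (h ▸ hi)
  · rw [Multiset.sum_sum, ← hsum]
    refine sum_congr rfl fun i hi => ?_
    rw [Multiset.sum_replicate, smul_eq_mul, Nat.div_mul_cancel (hdvd i hi)]
  · ext x
    exact hcount x

theorem coeff_prod_eq_sum_prod_count {N : ℕ} {s : Finset ℕ} (hs0 : 0 ∉ s) (hs : Icc 1 N ⊆ s)
    (a : ℕ → ℕ → R) (ψ : ℕ → R⟦X⟧)
    (hψ : ∀ i ∈ s, ∀ k, coeff k (ψ i) = if i ∣ k then a i (k / i) else 0) :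
    coeff N (∏ i ∈ s, ψ i) = ∑ p : N.Partition, ∏ i ∈ s, a i (p.parts.count i) := by
  rw [coeff_prod]
  symm
  refine sum_of_injOn toFinsuppAntidiag (toFinsuppAntidiag_injective N).injOn
    (fun p _ => finsuppAntidiag_mono hs N p.toFinsuppAntidiag_mem_finsuppAntidiag) ?_ ?_
  · intro g hg hg'
    by_contra hne
    have hdvd : ∀ i ∈ s, i ∣ g i := fun i hi => by
      by_contra hi'
      exact hne (prod_eq_zero hi (by rw [hψ i hi, if_neg hi']))
    obtain ⟨p, rfl⟩ := exists_toFinsuppAntidiag_eq hs0 hg hdvd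
    exact hg' ⟨p, mem_coe.mpr (mem_univ p), rfl⟩
  · intro p _
    refine prod_congr rfl fun i hi => ?_
    have hi0 : 0 < i := Nat.pos_of_ne_zero fun h => hs0 (h ▸ hi)
    rw [hψ i hi]
    simp [toFinsuppAntidiag, Nat.mul_div_cancel _ hi0]

theorem card_filter_eq_coeff_prod {N : ℕ} {s : Finset ℕ} (hs0 : 0 ∉ s) (hs : Icc 1 N ⊆ s)
    (P : ℕ → ℕ → Prop) [∀ i, DecidablePred (P i)] (ψ : ℕ → R⟦X⟧)
    (hψ : ∀ i ∈ s, ∀ k, coeff k (ψ i) = if i ∣ k ∧ P i (k / i) then 1 else 0) :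
    (#{p : N.Partition | ∀ i ∈ s, P i (p.parts.count i)} : R) = coeff N (∏ i ∈ s, ψ i) := by
  rw [coeff_prod_eq_sum_prod_count hs0 hs (fun i c => if P i c then 1 else 0) ψ
    fun i hi k => by rw [hψ i hi, ite_and]]
  simp only [prod_boole, sum_boole]

theorem forall_mem_Icc_count_iff {N n : ℕ} (hN : N ≤ n) (p : N.Partition) {P : ℕ → ℕ → Prop}
    (hP : ∀ i, P i 0) :
    (∀ i ∈ Icc 1 n, P i (p.parts.count i)) ↔ ∀ i ∈ p.parts, P i (p.parts.count i) := by
  refine ⟨fun h i hi => h i (Icc_subset_Icc_right hN (mem_Icc_of_mem_parts_s13 hi)), fun h i _ => ?_⟩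
  by_cases hi : i ∈ p.parts
  · exact h i hi
  · rw [Multiset.count_eq_zero.mpr hi]
    exact hP i

theorem forall_mem_Icc_not_dvd_or_count_eq_zero_iff {N n r : ℕ} (hN : N ≤ n)
    (p : N.Partition) :
    (∀ i ∈ Icc 1 n, ¬ r ∣ i ∨ p.parts.count i = 0) ↔ ∀ i ∈ p.parts, ¬ r ∣ i := by
  rw [forall_mem_Icc_count_iff hN p (P := fun i c => ¬ r ∣ i ∨ c = 0) fun _ => Or.inr rfl]
  exact forall₂_congr fun i hi => by simp [Multiset.count_eq_zero, hi]

end Nat.Partition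

namespace PowerSeries

theorem coeff_mul_eq_of_coeff_eq {R : Type*} [CommSemiring R] {n : ℕ} {f g : R⟦X⟧}
    (h : ∀ N ≤ n, coeff N f = coeff N g) (H : R⟦X⟧) : coeff n (H * f) = coeff n (H * g) := by
  simp only [coeff_mul]
  exact sum_congr rfl fun x hx => by rw [h x.2 (HasAntidiagonal.antidiagonal.snd_le hx)]

variable {K : Type*} [Field K]

theorem expand_inv (d : ℕ) (hd : d ≠ 0) (f : K⟦X⟧) :
    expand d hd f⁻¹ = (expand d hd f)⁻¹ := by
  by_cases h : constantCoeff f = 0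
  · rw [inv_eq_zero.mpr h, inv_eq_zero.mpr (by rwa [constantCoeff_expand]), map_zero]
  · rw [eq_inv_iff_mul_eq_one (by rwa [constantCoeff_expand]), ← map_mul,
      PowerSeries.inv_mul_cancel _ h, map_one]

theorem inv_one_sub_X_pow_eq_expand {d : ℕ} (hd : d ≠ 0) :
    (1 - X ^ d : K⟦X⟧)⁻¹ = expand d hd (mk 1) := by
  have h : (1 - X : K⟦X⟧)⁻¹ = mk 1 := by
    rw [inv_eq_iff_mul_eq_one (by simp), mk_one_mul_one_sub_eq_one]
  rw [← h, expand_inv, map_sub, map_one, expand_X]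

theorem coeff_inv_one_sub_X_pow {d : ℕ} (hd : d ≠ 0) (k : ℕ) :
    coeff k (1 - X ^ d : K⟦X⟧)⁻¹ = if d ∣ k then 1 else 0 := by
  simp [inv_one_sub_X_pow_eq_expand hd, coeff_expand]

theorem coeff_X_pow_mul_inv_one_sub_X_pow (a : ℕ) {d : ℕ} (hd : d ≠ 0) (k : ℕ) :
    coeff k (X ^ a * (1 - X ^ d : K⟦X⟧)⁻¹) = if a ≤ k ∧ d ∣ k - a then 1 else 0 := by
  rw [coeff_X_pow_mul', coeff_inv_one_sub_X_pow hd]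
  by_cases h : a ≤ k <;> simp [h]

theorem coeff_X_pow_mul_mul_inv_one_sub_X_pow_mul {i : ℕ} (hi : i ≠ 0) (a : ℕ) {d : ℕ}
    (hd : d ≠ 0) (k : ℕ) :
    coeff k (X ^ (i * a) * (1 - X ^ (i * d))⁻¹ : K⟦X⟧) =
      if i ∣ k ∧ a ≤ k / i ∧ d ∣ k / i - a then 1 else 0 := by
  have h : (X ^ (i * a) * (1 - X ^ (i * d))⁻¹ : K⟦X⟧) = expand i hi (X ^ a * (1 - X ^ d)⁻¹) := by
    simp [expand_inv, pow_mul]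
  rw [h, coeff_expand, coeff_X_pow_mul_inv_one_sub_X_pow a hd]
  by_cases hk : i ∣ k <;> simp [hk]

theorem coeff_inv_one_sub_X_pow_mul_X_pow_mul_inv {d : ℕ} (hd : d ≠ 0) (k : ℕ) :
    coeff k ((1 - X ^ d : K⟦X⟧)⁻¹ * (X ^ d * (1 - X ^ d)⁻¹)) =
      if d ∣ k then ((k / d : ℕ) : K) else 0 := by
  have h (k : ℕ) : coeff k (mk 1 * (X * mk 1) : K⟦X⟧) = k := by
    rw [mul_left_comm, ← pow_two, mk_one_pow_eq_mk_choose_add]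
    cases k <;> simp [coeff_succ_X_mul, add_comm]
  have he : (1 - X ^ d : K⟦X⟧)⁻¹ * (X ^ d * (1 - X ^ d)⁻¹) =
      expand d hd (mk 1 * (X * mk 1)) := by
    simp [inv_one_sub_X_pow_eq_expand hd]
  rw [he, coeff_expand]
  split_ifs <;> simp [h]

theorem coeff_ite_not_dvd_inv_one_sub_X_pow (r : ℕ) {d : ℕ} (hd : d ≠ 0) (k : ℕ) :
    coeff k (if ¬ r ∣ d then (1 - X ^ d : K⟦X⟧)⁻¹ else 1) =
      if d ∣ k ∧ (¬ r ∣ d ∨ k / d = 0) then 1 else 0 := by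
  by_cases h : r ∣ d
  · rcases Nat.eq_zero_or_pos k with rfl | hk
    · simp [h]
    · simpa [h, hk.ne', coeff_one, Nat.div_eq_zero_iff, hd] using Nat.le_of_dvd hk
  · simp [h, coeff_inv_one_sub_X_pow hd]

theorem coeff_sum_X_pow_mul {d : ℕ} (hd : d ≠ 0) (S : Finset ℕ) (k : ℕ) :
    coeff k (∑ c ∈ S, X ^ (d * c) : K⟦X⟧) = if d ∣ k ∧ k / d ∈ S then 1 else 0 := by
  have h : (∑ c ∈ S, X ^ (d * c) : K⟦X⟧) = expand d hd (∑ c ∈ S, X ^ c) := by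
    simp [map_sum, pow_mul]
  rw [h, coeff_expand]
  split_ifs with h1 h2 h2 <;> simp_all [coeff_X_pow]

theorem sum_Ico_X_pow_mul_eq {i j r : ℕ} (hi : i ≠ 0) (hr : r ≠ 0) (hjr : j ≤ r) :
    (∑ c ∈ Ico j r, X ^ (i * c) : K⟦X⟧) =
      (X ^ (i * j) - X ^ (i * r)) * (1 - X ^ (i * r))⁻¹ * ∑ c ∈ range r, X ^ (i * c) := by
  have e := one_sub_pow_mul_sum_Ico (X ^ i : K⟦X⟧) hjr
  have hu : (1 - X ^ (i * r) : K⟦X⟧) * (1 - X ^ (i * r))⁻¹ = 1 :=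
    PowerSeries.mul_inv_cancel _ (by simp [hi, hr])
  simp only [← pow_mul] at e
  linear_combination (1 - X ^ (i * r) : K⟦X⟧)⁻¹ * e - (∑ c ∈ Ico j r, X ^ (i * c) : K⟦X⟧) * hu

theorem coeff_sum_filter_mod_eq_coeff_sum {r j n N : ℕ} (hj : j ≠ 0) (hjr : j < r)
    (hN : N ≤ n) :
    coeff N (∑ m ∈ Icc 1 n with m % r = j, X ^ m * (1 - X ^ m)⁻¹ : K⟦X⟧) =
      coeff N (∑ i ∈ Icc 1 n, X ^ (i * j) * (1 - X ^ (i * r))⁻¹) := by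
  have hr : r ≠ 0 := by omega
  rw [map_sum, map_sum, sum_filter]
  rcases Nat.eq_zero_or_pos N with rfl | hN0
  · refine (sum_eq_zero fun m hm => ?_).trans (sum_eq_zero fun i hi => ?_).symm
    · have hm0 := Nat.ne_zero_of_mem_Icc_one hm
      simp [coeff_X_pow_mul_inv_one_sub_X_pow m hm0, hm0]
    · simp [coeff_X_pow_mul_mul_inv_one_sub_X_pow_mul (Nat.ne_zero_of_mem_Icc_one hi) j hr, hj]
  have hdvd {m : ℕ} : m ≤ N ∧ m ∣ N - m ↔ m ∣ N := by
    rw [Nat.dvd_sub_self_right]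
    exact ⟨fun ⟨hmN, h⟩ => h.elim id fun hNm => le_antisymm hmN hNm ▸ dvd_rfl,
      fun h => ⟨Nat.le_of_dvd hN0 h, Or.inl h⟩⟩
  calc ∑ m ∈ Icc 1 n, (if m % r = j then coeff N (X ^ m * (1 - X ^ m : K⟦X⟧)⁻¹) else 0)
      = ∑ m ∈ Icc 1 n, (if m ∣ N ∧ m % r = j then 1 else 0 : K) := by
        refine sum_congr rfl fun m hm => ?_
        rw [coeff_X_pow_mul_inv_one_sub_X_pow m (Nat.ne_zero_of_mem_Icc_one hm)]
        simp only [← ite_and, hdvd, and_comm]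
    _ = #{d ∈ N.divisors | d % r = j} := Nat.sum_Icc_ite_dvd_eq_card_divisors hN0 hN _
    _ = #{d ∈ N.divisors | N / d % r = j} :=
        congrArg _ (Nat.card_filter_divisors_div N (· % r = j)).symm
    _ = ∑ i ∈ Icc 1 n, (if i ∣ N ∧ N / i % r = j then 1 else 0 : K) :=
        (Nat.sum_Icc_ite_dvd_eq_card_divisors hN0 hN _).symm
    _ = _ := sum_congr rfl fun i hi => by
        rw [coeff_X_pow_mul_mul_inv_one_sub_X_pow_mul (Nat.ne_zero_of_mem_Icc_one hi) j hr]
        simp only [Nat.le_and_dvd_sub_iff_mod_eq hjr]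

end PowerSeries

noncomputable def Phi (r n : ℕ) : ℚ⟦X⟧ :=
  ∏ k ∈ Icc 1 n, if ¬ r ∣ k then (1 - X ^ k)⁻¹ else 1

open Nat.Partition

theorem coeff_prod_sum_range_eq_coeff_Phi {r n N : ℕ} (hr : 0 < r) (hN : N ≤ n) :
    coeff N (∏ k ∈ Icc 1 n, ∑ c ∈ range r, X ^ (k * c) : ℚ⟦X⟧) = coeff N (Phi r n) := by
  have hs0 : 0 ∉ Icc 1 n := by simp
  have hs : Icc 1 N ⊆ Icc 1 n := Icc_subset_Icc_right hN
  rw [Phi, ← card_filter_eq_coeff_prod hs0 hs (fun _ c => c ∈ range r) _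
      fun k hk => coeff_sum_X_pow_mul (Nat.ne_zero_of_mem_Icc_one hk) _,
    ← card_filter_eq_coeff_prod hs0 hs (fun k c => ¬ r ∣ k ∨ c = 0) _
      fun k hk => coeff_ite_not_dvd_inv_one_sub_X_pow r (Nat.ne_zero_of_mem_Icc_one hk),
    filter_congr fun p _ => forall_mem_Icc_count_iff hN p (P := fun _ c => c ∈ range r)
      fun _ => mem_range.mpr hr,
    filter_congr fun p _ => forall_mem_Icc_not_dvd_or_count_eq_zero_iff hN p]
  simp only [mem_range]
  exact_mod_cast (card_restricted_eq_card_countRestricted N hr).symm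

theorem sum_count_CP_eq_coeff {r n m : ℕ} (hm : m ∈ Icc 1 n) (hrm : ¬ r ∣ m) :
    (∑ ρ ∈ CP r n, ρ.parts.count m : ℚ) = coeff n (Phi r n * (X ^ m * (1 - X ^ m)⁻¹)) := by
  have hprod : ∏ k ∈ Icc 1 n, (if ¬ r ∣ k then (1 - X ^ k : ℚ⟦X⟧)⁻¹ else 1) *
      (if k = m then X ^ m * (1 - X ^ m)⁻¹ else 1) = Phi r n * (X ^ m * (1 - X ^ m)⁻¹) := by
    rw [prod_mul_distrib, prod_ite_eq', if_pos hm, Phi]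
  rw [← hprod, coeff_prod_eq_sum_prod_count (by simp) subset_rfl
    (fun k c => (if ¬ r ∣ k ∨ c = 0 then 1 else 0) * if k = m then (c : ℚ) else 1)]
  · simp_rw [prod_mul_distrib, prod_boole, prod_ite_eq', if_pos hm,
      forall_mem_Icc_not_dvd_or_count_eq_zero_iff le_rfl, ite_mul, one_mul, zero_mul]
    rw [CP, sum_filter]
  · intro k hk N
    have hk0 := Nat.ne_zero_of_mem_Icc_one hk
    by_cases hkm : k = m
    · subst hkm
      rw [if_pos rfl, if_pos hrm, coeff_inv_one_sub_X_pow_mul_X_pow_mul_inv hk0]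
      split_ifs <;> simp_all
    · rw [if_neg hkm, mul_one, coeff_ite_not_dvd_inv_one_sub_X_pow r hk0]
      simp [hkm, ite_and]

theorem card_filter_RP_eq_coeff {r j n i : ℕ} (hjr : j < r) (hi : i ∈ Icc 1 n) :
    (#{l ∈ RP r n | j ≤ l.parts.count i} : ℚ) =
      coeff n (Phi r n * ((X ^ (i * j) - X ^ (i * r)) * (1 - X ^ (i * r))⁻¹)) := by
  set S : ℕ → Finset ℕ := fun k => if k = i then Ico j r else range r with hS
  have hprod : ∏ k ∈ Icc 1 n, ∑ c ∈ S k, X ^ (k * c) =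
      (X ^ (i * j) - X ^ (i * r)) * (1 - X ^ (i * r))⁻¹ *
        ∏ k ∈ Icc 1 n, ∑ c ∈ range r, (X ^ (k * c) : ℚ⟦X⟧) := by
    rw [← mul_prod_erase _ _ hi, ← mul_prod_erase _ (fun k => ∑ c ∈ range r, X ^ (k * c)) hi,
      ← mul_assoc, ← sum_Ico_X_pow_mul_eq (Nat.ne_zero_of_mem_Icc_one hi) (by omega) hjr.le]
    congr 1
    · simp [hS]
    · exact prod_congr rfl fun k hk => by simp [hS, ne_of_mem_erase hk]
  rw [mul_comm,
    ← coeff_mul_eq_of_coeff_eq fun N hN => coeff_prod_sum_range_eq_coeff_Phi (by omega) hN,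
    ← hprod, ← card_filter_eq_coeff_prod (by simp) subset_rfl (fun k c => c ∈ S k) _
      fun k hk => coeff_sum_X_pow_mul (Nat.ne_zero_of_mem_Icc_one hk) (S k)]
  congr 2
  ext p
  simp only [RP, filter_filter, mem_filter, mem_univ, true_and]
  constructor
  · rintro ⟨hlt, hji⟩ k _
    by_cases hk : k = i
    · subst hk
      simp [hS, hji, hlt]
    · simp [hS, hk, hlt]
  · intro h
    have hi' : j ≤ p.parts.count i ∧ p.parts.count i < r := by simpa [hS] using h i hi
    refine ⟨fun k => ?_, hi'.1⟩
    by_cases hk : k ∈ Icc 1 n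
    · by_cases hki : k = i
      · exact hki ▸ hi'.2
      · simpa [hS, hki] using h k hk
    · rw [Multiset.count_eq_zero.mpr fun hm => hk (mem_Icc_of_mem_parts_s13 hm)]
      omega

theorem Xrjn_eq_sum_coeff {r j n : ℕ} (hj : j ≠ 0) :
    (Xrjn r j n : ℚ) =
      ∑ m ∈ Icc 1 n with m % r = j, coeff n (Phi r n * (X ^ m * (1 - X ^ m)⁻¹)) := by
  have hcard (ρ : n.Partition) : Multiset.card (ρ.parts.filter (· % r = j)) =
      ∑ m ∈ Icc 1 n with m % r = j, ρ.parts.count m := by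
    rw [← Multiset.sum_count_eq_card fun m hm =>
      mem_filter.mpr ⟨mem_Icc_of_mem_parts_s13 (Multiset.mem_of_mem_filter hm),
        (Multiset.mem_filter.mp hm).2⟩]
    exact sum_congr rfl fun m hm => Multiset.count_filter_of_pos (mem_filter.mp hm).2
  rw [Xrjn, sum_congr rfl fun ρ _ => hcard ρ, sum_comm]
  push_cast
  refine sum_congr rfl fun m hm => sum_count_CP_eq_coeff (mem_filter.mp hm).1 fun hrm => hj ?_
  rw [← (mem_filter.mp hm).2, Nat.mod_eq_zero_of_dvd hrm]

theorem Yrjn_eq_sum_coeff {r j n : ℕ} (hj : 1 ≤ j) (hjr : j < r) :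
    (Yrjn r j n : ℚ) = ∑ i ∈ Icc 1 n,
      coeff n (Phi r n * ((X ^ (i * j) - X ^ (i * r)) * (1 - X ^ (i * r))⁻¹)) := by
  have hfilter (l : n.Partition) : {i ∈ l.parts.toFinset | j ≤ l.parts.count i} =
      {i ∈ Icc 1 n | j ≤ l.parts.count i} := by
    ext i
    simp only [mem_filter, Multiset.mem_toFinset]
    exact ⟨fun ⟨hi, hji⟩ => ⟨mem_Icc_of_mem_parts_s13 hi, hji⟩,
      fun ⟨_, hji⟩ => ⟨Multiset.count_pos.mp (by omega), hji⟩⟩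
  rw [Yrjn]
  simp_rw [hfilter, card_filter]
  rw [sum_comm]
  push_cast
  refine sum_congr rfl fun i hi => ?_
  rw [← card_filter_RP_eq_coeff hjr hi, card_filter]
  push_cast
  rfl

theorem X_sub_Y_eq_c_general (r j n : ℕ) (hj : 1 ≤ j) (hjr : j ≤ r - 1) :
    (Xrjn r j n : ℚ) - Yrjn r j n = cCoeff r n := by
  have hjr' : j < r := by omega
  rw [Xrjn_eq_sum_coeff (by omega), Yrjn_eq_sum_coeff hj hjr', cCoeff, ← Phi]
  simp only [← map_sum, ← mul_sum]
  rw [coeff_mul_eq_of_coeff_eq fun N hN => coeff_sum_filter_mod_eq_coeff_sum (by omega) hjr' hN,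
    ← map_sub, ← mul_sub, ← sum_sub_distrib]
  congr 2
  refine sum_congr rfl fun i _ => ?_
  rw [mul_comm i r]
  ring

/-- `X_{r,j,n} - Y_{r,j,n} = c_{r,n}` for every `j ∈ {1, …, r-1}`. -/
theorem X_sub_Y_eq_c (r j n : ℕ) (hr : 2 ≤ r) (hj : 1 ≤ j) (hjr : j ≤ r - 1) :
    (Xrjn r j n : ℚ) - Yrjn r j n = cCoeff r n :=
  X_sub_Y_eq_c_general r j n hj hjr
end

section
/- For r ≥ 2 and 1 ≤ j ≤ r-1, the generating function Σ_n Y_{r,j,n} q^n equals Φ_r(q) · Σ_{k ≥ 1} (q^{jk} - q^{rk})/(1 - q^{rk}), where Y_{r,j,n} is the total number of part-sizes with multiplicity at least j, summed over all r-regular partitions of n. -/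
open Nat Finset PowerSeries
open scoped Classical

/-!
Split `Y_{r,j,n}` according to the part size `k`. The `r`-regular partitions of `n` in which `k`
occurs at least `j` times are the `r`-regular ones minus those in which `k` occurs fewer than `j`
times; both families are cut out by bounds on all multiplicities, so Euler's product formula counts
them, and the two products differ only in the factor of `k`. The count is therefore the `n`-th
coefficient of
`∏_{i ≥ 1} (1 + q^i + ⋯ + q^{(r-1)i}) · (q^{jk} + ⋯ + q^{(r-1)k}) / (1 + q^k + ⋯ + q^{(r-1)k})
  = Φ_r(q) · (q^{jk} - q^{rk}) / (1 - q^{rk})`,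
because `∏_{i ≥ 1} (1 - q^{ri}) / (1 - q^i) = Φ_r(q)`. All identities are only needed modulo
`q^{n+1}`, which is what makes the truncations harmless.
-/

noncomputable section

open scoped PowerSeries.WithPiTopology

namespace PowerSeries

section CommRing

variable {R : Type*} [CommRing R]

def partSeries (i t : ℕ) : R⟦X⟧ := ∑ m ∈ range t, X ^ (m * i)

theorem coeff_eq_of_mk_eq {N d : ℕ} {A B : R⟦X⟧}
    (h : Ideal.Quotient.mk (Ideal.span {X ^ N}) A = Ideal.Quotient.mk _ B) (hd : d < N) :
    coeff d A = coeff d B := by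
  rw [Ideal.Quotient.eq, Ideal.mem_span_singleton, X_pow_dvd_iff] at h
  simpa [sub_eq_zero] using h d hd

theorem mk_X_pow_eq_zero {N m : ℕ} (h : N ≤ m) :
    Ideal.Quotient.mk (Ideal.span {(X : R⟦X⟧) ^ N}) (X ^ m) = 0 :=
  Ideal.Quotient.eq_zero_iff_mem.2 (Ideal.mem_span_singleton.2 (pow_dvd_pow X h))

theorem mk_prod_one_sub_X_pow_filter_dvd {r : ℕ} (hr : 0 < r) (n : ℕ) :
    Ideal.Quotient.mk (Ideal.span {X ^ (n + 1)}) (∏ m ∈ (Icc 1 n).filter (r ∣ ·), (1 - X ^ m)) =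
      Ideal.Quotient.mk _ (∏ i ∈ Icc 1 n, (1 - X ^ (r * i) : R⟦X⟧)) := by
  have hinj : Set.InjOn (r * ·) (Icc 1 n) := fun a _ b _ h => Nat.eq_of_mul_eq_mul_left hr h
  rw [← prod_image (f := fun m => (1 - X ^ m : R⟦X⟧)) hinj, map_prod, map_prod]
  refine prod_subset (fun m hm => ?_) fun m hm hm' => ?_
  · obtain ⟨⟨hm1, hmn⟩, c, rfl⟩ := by simpa only [mem_filter, mem_Icc] using hm
    refine mem_image.2 ⟨c, mem_Icc.2 ⟨Nat.pos_of_mul_pos_left hm1, ?_⟩, rfl⟩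
    exact (Nat.le_mul_of_pos_left c hr).trans hmn
  · obtain ⟨c, hc, rfl⟩ := mem_image.1 hm
    have hrc : n + 1 ≤ r * c := by
      by_contra! h
      exact hm' (mem_filter.2 ⟨mem_Icc.2 ⟨Nat.mul_pos hr (mem_Icc.1 hc).1, by omega⟩,
        dvd_mul_right r c⟩)
    rw [map_sub, map_one, mk_X_pow_eq_zero hrc, sub_zero]

theorem coeff_eq_coeff_prod_range_of_hasProd [TopologicalSpace R] [T2Space R]
    {g : ℕ → R⟦X⟧} {F : R⟦X⟧} (hF : HasProd g F) {d N : ℕ}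
    (hg : ∀ i ≥ N, Ideal.Quotient.mk (Ideal.span {X ^ (d + 1)}) (g i) = 1) :
    coeff d F = coeff d (∏ i ∈ range N, g i) := by
  refine tendsto_nhds_unique ((WithPiTopology.continuous_coeff R d).tendsto F |>.comp hF)
    (tendsto_const_nhds.congr' ?_)
  filter_upwards [Filter.eventually_ge_atTop (range N)] with s hs
  refine coeff_eq_of_mk_eq ?_ d.lt_succ_self
  simp_rw [map_prod]
  exact prod_subset hs fun i _ hi => hg i (by simpa using hi)

theorem mk_partSeries_eq_one {N i t : ℕ} (hi : N ≤ i) (ht : 0 < t) :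
    Ideal.Quotient.mk (Ideal.span {X ^ N}) (partSeries i t : R⟦X⟧) = 1 := by
  obtain ⟨t, rfl⟩ := Nat.exists_eq_add_one_of_ne_zero ht.ne'
  rw [partSeries, sum_range_succ', map_add, map_sum]
  simp [mk_X_pow_eq_zero (le_mul_of_one_le_of_le (Nat.le_add_left 1 _) hi)]

theorem one_sub_X_pow_mul_partSeries (i t : ℕ) :
    (1 - X ^ i) * partSeries i t = (1 - X ^ (t * i) : R⟦X⟧) := by
  simp_rw [partSeries, pow_mul']
  exact mul_neg_geom_sum _ _

theorem constantCoeff_one_sub_X_pow [Nontrivial R] {m : ℕ} (hm : m ≠ 0) :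
    constantCoeff (1 - X ^ m : R⟦X⟧) = 1 := by
  simp [zero_pow hm]

theorem prod_partSeries_sub_prod_partSeries_update {s : Finset ℕ} {k : ℕ} (hk : k ∈ s)
    (b : ℕ → ℕ) (t : ℕ) :
    ∏ i ∈ s, partSeries i (b i) - ∏ i ∈ s, partSeries i (Function.update b k t i) =
      (partSeries k (b k) - partSeries k t) * ∏ i ∈ s \ {k}, (partSeries i (b i) : R⟦X⟧) := by
  simp_rw [Function.apply_update (fun i t => (partSeries i t : R⟦X⟧))]
  rw [prod_update_of_mem hk, prod_eq_mul_prod_sdiff_singleton_of_mem hk, sub_mul]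

end CommRing

theorem partSeries_sub_partSeries {K : Type*} [Field K] {i r : ℕ} (hi : 0 < i) (hr : 0 < r)
    (j : ℕ) :
    partSeries i r - partSeries i j =
      partSeries i r * ((X ^ (j * i) - X ^ (r * i)) * (1 - X ^ (r * i) : K⟦X⟧)⁻¹) := by
  rw [← mul_assoc, eq_mul_inv_iff_mul_eq (by simp [constantCoeff_one_sub_X_pow, hi.ne', hr.ne'])]
  refine mul_left_cancel₀ (a := 1 - X ^ i) ?_ ?_
  · exact fun h => by simpa [constantCoeff_one_sub_X_pow hi.ne'] using congrArg constantCoeff h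
  · linear_combination (1 - X ^ (r * i) - (X ^ (j * i) - X ^ (r * i))) *
      one_sub_X_pow_mul_partSeries (R := K) i r -
        (1 - X ^ (r * i)) * one_sub_X_pow_mul_partSeries (R := K) i j

end PowerSeries

namespace Nat.Partition

variable {R : Type*} [CommRing R]

def countBounded (n : ℕ) (b : ℕ → ℕ) : Finset n.Partition :=
  univ.filter fun p => ∀ i, p.parts.count i < b i

theorem hasProd_card_countBounded [TopologicalSpace R] [T2Space R] {b : ℕ → ℕ}
    (hb : ∀ i, 0 < b i) :
    HasProd (fun i ↦ partSeries (i + 1) (b (i + 1)))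
      (PowerSeries.mk fun n ↦ (#(countBounded n b) : R)) := by
  convert! hasProd_genFun (fun i c ↦ if c < b i then (1 : R) else 0) using 1
  · ext1 i
    obtain ⟨t, ht⟩ := Nat.exists_eq_add_one_of_ne_zero (hb (i + 1)).ne'
    rw [partSeries, ht, sum_range_succ', tsum_eq_sum (s := range t) fun m hm => by simp_all]
    rw [add_comm, zero_mul, pow_zero]
    congr 1
    refine Finset.sum_congr rfl fun m hm => ?_
    rw [if_pos (by simpa using hm), one_smul, mul_comm]
  · ext n
    simp_rw [coeff_mk, coeff_genFun, Finsupp.prod, prod_boole, sum_boole, countBounded]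
    congr 2
    refine filter_congr fun p _ => ⟨fun h i _ => h i, fun h i => ?_⟩
    by_cases hi : i ∈ p.parts
    · exact h i (by simpa using hi)
    · simpa [Multiset.count_eq_zero_of_notMem hi] using hb i

theorem card_countBounded_eq_coeff {b : ℕ → ℕ} (hb : ∀ i, 0 < b i) (n : ℕ) :
    (#(countBounded n b) : R) = coeff n (∏ i ∈ Icc 1 n, partSeries i (b i)) := by
  -- any Hausdorff topology on `R` gives access to the infinite product formula
  let _ : TopologicalSpace R := ⊥
  have _ : DiscreteTopology R := ⟨rfl⟩
  rw [← coeff_mk n fun n ↦ (#(countBounded n b) : R),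
    coeff_eq_coeff_prod_range_of_hasProd (N := n) (hasProd_card_countBounded hb)
      fun i hi => mk_partSeries_eq_one (by omega) (hb _),
    range_eq_Ico, prod_Ico_add' (fun i => partSeries i (b i)), Ico_add_one_right_eq_Icc]

theorem filter_le_count_eq {n j : ℕ} (hj : 0 < j) (l : n.Partition) :
    l.parts.toFinset.filter (j ≤ l.parts.count ·) = (Icc 1 n).filter (j ≤ l.parts.count ·) := by
  ext i
  simp only [mem_filter, Multiset.mem_toFinset, mem_Icc, and_congr_left_iff]
  intro hji
  have hi : i ∈ l.parts := Multiset.count_pos.1 (by omega)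
  exact ⟨fun hi => ⟨l.parts_pos hi, le_of_mem_parts hi⟩, fun _ => hi⟩

end Nat.Partition

open Nat.Partition

theorem mk_phiTrunc_eq {r : ℕ} (hr : 0 < r) (n : ℕ) :
    Ideal.Quotient.mk (Ideal.span {X ^ (n + 1)}) (PhiTrunc r n) =
      Ideal.Quotient.mk _ (∏ i ∈ Icc 1 n, partSeries i r) := by
  have hpos : ∀ i ∈ Icc 1 n, i ≠ 0 := fun i hi => by have := (mem_Icc.1 hi).1; omega
  have hD : IsUnit (Ideal.Quotient.mk (Ideal.span {X ^ (n + 1)})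
      (∏ i ∈ Icc 1 n, (1 - X ^ i : ℚ⟦X⟧))) := by
    refine (isUnit_iff_constantCoeff.2 ?_).map _
    rw [map_prod, prod_eq_one fun i hi => constantCoeff_one_sub_X_pow (hpos i hi)]
    exact isUnit_one
  have hPhi : PhiTrunc r n * ∏ i ∈ Icc 1 n, (1 - X ^ i) =
      ∏ i ∈ (Icc 1 n).filter (r ∣ ·), (1 - X ^ i) := by
    rw [PhiTrunc, ← prod_mul_distrib, prod_filter]
    refine prod_congr rfl fun i hi => ?_
    by_cases h : r ∣ i
    · simp [h]
    · rw [if_neg h, if_pos h, PowerSeries.inv_mul_cancel]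
      simp [constantCoeff_one_sub_X_pow (R := ℚ) (hpos i hi)]
  have hP : (∏ i ∈ Icc 1 n, partSeries i r) * ∏ i ∈ Icc 1 n, (1 - X ^ i) =
      ∏ i ∈ Icc 1 n, (1 - X ^ (r * i) : ℚ⟦X⟧) := by
    rw [← prod_mul_distrib]
    exact prod_congr rfl fun i _ => by rw [mul_comm, one_sub_X_pow_mul_partSeries]
  rw [← hD.mul_left_inj, ← map_mul, ← map_mul, hPhi, hP, mk_prod_one_sub_X_pow_filter_dvd hr]

theorem coeff_phiTrunc_mul {r : ℕ} (hr : 0 < r) (n : ℕ) (A : ℚ⟦X⟧) :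
    coeff n (PhiTrunc r n * A) = coeff n ((∏ i ∈ Icc 1 n, partSeries i r) * A) :=
  coeff_eq_of_mk_eq (by rw [map_mul, map_mul, mk_phiTrunc_eq hr]) n.lt_succ_self

theorem Yrjn_eq_sum_card {r j : ℕ} (hj : 0 < j) (n : ℕ) :
    Yrjn r j n = ∑ k ∈ Icc 1 n, #{l ∈ RP r n | j ≤ l.parts.count k} := by
  simp_rw [Yrjn, filter_le_count_eq hj, card_filter]
  exact sum_comm

theorem card_filter_le_count_eq {R : Type*} [CommRing R] {r j : ℕ} (hjr : j ≤ r) (n k : ℕ) :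
    ((#{l ∈ RP r n | j ≤ l.parts.count k} : ℕ) : R) =
      #(countBounded n fun _ => r) - #(countBounded n (Function.update (fun _ => r) k j)) := by
  have hsplit := card_filter_add_card_filter_not (s := RP r n) (j ≤ ·.parts.count k)
  have hlt : {l ∈ RP r n | ¬ j ≤ l.parts.count k} =
      countBounded n (Function.update (fun _ => r) k j) := by
    ext l
    simp only [RP, countBounded, mem_filter, mem_univ, true_and, not_le, Function.update_apply]
    refine ⟨fun ⟨h, hk⟩ i => ?_, fun h => ⟨fun i => ?_, by simpa using h k⟩⟩
    · split_ifs with hik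
      · exact hik ▸ hk
      · exact h i
    · have := h i
      split_ifs at this <;> omega
  rw [eq_sub_iff_add_eq, ← hlt, ← Nat.cast_add, hsplit]
  rfl

theorem genFun_Y_general (r j : ℕ) (hj : 1 ≤ j) (hjr : j ≤ r - 1) (n : ℕ) :
    PowerSeries.coeff (R := ℚ) n
      (PhiTrunc r n * ∑ k ∈ Finset.Icc 1 n,
        ((PowerSeries.X : PowerSeries ℚ) ^ (j * k) -
            (PowerSeries.X : PowerSeries ℚ) ^ (r * k)) *
          (1 - (PowerSeries.X : PowerSeries ℚ) ^ (r * k))⁻¹) = Yrjn r j n := by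
  have hr : 0 < r := by omega
  have hb : ∀ k i : ℕ, 0 < Function.update (fun _ => r) k j i := fun k i => by
    rw [Function.update_apply]
    split_ifs <;> omega
  rw [coeff_phiTrunc_mul hr, mul_sum, map_sum, Yrjn_eq_sum_card hj, Nat.cast_sum]
  refine sum_congr rfl fun k hk => ?_
  rw [card_filter_le_count_eq (by omega), card_countBounded_eq_coeff (fun _ => hr),
    card_countBounded_eq_coeff (hb k), ← map_sub,
    prod_partSeries_sub_prod_partSeries_update hk,
    partSeries_sub_partSeries (mem_Icc.1 hk).1 hr, prod_eq_mul_prod_sdiff_singleton_of_mem hk,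
    mul_right_comm]

/-- `Σ_n Y_{r,j,n} q^n = Φ_r(q) · Σ_{k ≥ 1} (q^{jk} - q^{rk})/(1-q^{rk})`, stated
coefficient-wise (the sum over `k` is truncated at `k ≤ n`, which does not change the `n`-th
coefficient). -/
theorem genFun_Y (r j : ℕ) (hr : 2 ≤ r) (hj : 1 ≤ j) (hjr : j ≤ r - 1) (n : ℕ) :
    PowerSeries.coeff (R := ℚ) n
      (PhiTrunc r n * ∑ k ∈ Finset.Icc 1 n,
        ((PowerSeries.X : PowerSeries ℚ) ^ (j * k) -
            (PowerSeries.X : PowerSeries ℚ) ^ (r * k)) *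
          (1 - (PowerSeries.X : PowerSeries ℚ) ^ (r * k))⁻¹) = Yrjn r j n :=
  genFun_Y_general r j hj hjr n
end
end

section
/- The Glaisher map g_r, which repeatedly replaces any part kr (a multiple of r) by r copies of k until no part is divisible by r, is a bijection from the set of r-regular partitions of n to the set of r-class regular partitions of n. -/
open Nat Finset
open scoped Classical

/-- The Glaisher map: iteratively replace each part `kr` by `r` copies of `k` until no part is
divisible by `r`.  Equivalently, a part `p = u·r^e` with `r ∤ u` becomes `r^e` copies of `u`,
where `e = padicValNat r p` is the exponent of `r` in `p`. -/
noncomputable def glaisher (r : ℕ) {n : ℕ} (l : n.Partition) : n.Partition where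
  parts := l.parts.bind fun p =>
    Multiset.replicate (r ^ padicValNat r p) (p / r ^ padicValNat r p)
  parts_pos := by
    intro i hi
    rw [Multiset.mem_bind] at hi
    obtain ⟨p, hp, hip⟩ := hi
    rw [Multiset.eq_of_mem_replicate hip]
    have hd : r ^ padicValNat r p ∣ p := pow_padicValNat_dvd
    have hppos : 0 < p := l.parts_pos hp
    have hpow : 0 < r ^ padicValNat r p := by
      rcases Nat.eq_zero_or_pos (r ^ padicValNat r p) with h | h
      · exfalso
        rw [h] at hd
        exact absurd (Nat.eq_zero_of_zero_dvd hd) (Nat.pos_iff_ne_zero.mp hppos)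
      · exact h
    exact Nat.div_pos (Nat.le_of_dvd hppos hd) hpow
  parts_sum := by
    rw [Multiset.sum_bind]
    have h : ∀ p ∈ l.parts,
        (Multiset.replicate (r ^ padicValNat r p) (p / r ^ padicValNat r p)).sum = p := by
      intro p hp
      rw [Multiset.sum_replicate, smul_eq_mul, Nat.mul_div_cancel' pow_padicValNat_dvd]
    rw [Multiset.map_congr rfl h, Multiset.map_id']
    exact l.parts_sum

/-!
Glaisher's map acts independently on each chain `u, r u, r² u, …` with `r ∤ u`: `m_k` copies
of `r ^ k * u` become `∑ m_k r ^ k` copies of `u`. On an `r`-regular partition the `m_k` are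
base-`r` digits, so the multiplicity of `u` in the image determines them, and conversely every
multiplicity `c < r ^ (n + 1)` of a class-regular partition is read back through its digits.
-/

theorem sum_range_pow_mul_div_pow_mod (r m K : ℕ) :
    ∑ k ∈ range K, r ^ k * (m / r ^ k % r) = m % r ^ K := by
  induction K with
  | zero => simp [Nat.mod_one]
  | succ K ih => rw [sum_range_succ, ih, pow_succ, Nat.mod_mul]

theorem sum_range_pow_mul_div_pow_mod_of_lt {r : ℕ} {a : ℕ → ℕ} (ha : ∀ j, a j < r)
    {K k : ℕ} (hk : k < K) : (∑ j ∈ range K, r ^ j * a j) / r ^ k % r = a k := by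
  induction K generalizing a k with
  | zero => omega
  | succ K ih =>
    have hr : 0 < r := Nat.zero_lt_of_lt (ha 0)
    have hsplit : ∑ j ∈ range (K + 1), r ^ j * a j
        = a 0 + r * ∑ j ∈ range K, r ^ j * a (j + 1) := by
      rw [sum_range_succ', mul_sum, pow_zero, one_mul, add_comm]
      simp only [pow_succ, mul_comm, mul_assoc]
    rcases k with _ | k
    · rw [hsplit, pow_zero, Nat.div_one, Nat.add_mul_mod_self_left, Nat.mod_eq_of_lt (ha 0)]
    · rw [hsplit, _root_.pow_succ', ← Nat.div_div_eq_div_mul, Nat.add_mul_div_left _ _ hr,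
        Nat.div_eq_of_lt (ha 0), zero_add]
      exact ih (fun j => ha (j + 1)) (by omega)

section Valuation

variable {r k u p : ℕ}

theorem pow_mul_eq_iff_padicValNat_eq_and_divMaxPow_eq (hp : p ≠ 0) (hu : ¬ r ∣ u) :
    r ^ k * u = p ↔ padicValNat r p = k ∧ p.divMaxPow r = u := by
  constructor
  · intro h
    rw [← Nat.fst_maxPowDvdDiv, ← Nat.snd_maxPowDvdDiv, Nat.maxPowDvdDiv_of_pow_mul_eq hp h hu]
    exact ⟨rfl, rfl⟩
  · rintro ⟨rfl, rfl⟩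
    exact Nat.pow_padicValNat_mul_divMaxPow r p

theorem pow_mul_inj {k' u' : ℕ} (hr : r ≠ 0) (hu : ¬ r ∣ u) (hu' : ¬ r ∣ u')
    (h : r ^ k * u = r ^ k' * u') : k = k' ∧ u = u' := by
  have hp : r ^ k' * u' ≠ 0 :=
    mul_ne_zero (pow_ne_zero _ hr) (by rintro rfl; exact hu' (dvd_zero r))
  obtain ⟨hk, hu⟩ := (pow_mul_eq_iff_padicValNat_eq_and_divMaxPow_eq hp hu).1 h
  obtain ⟨hk', hu'⟩ := (pow_mul_eq_iff_padicValNat_eq_and_divMaxPow_eq hp hu').1 rfl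
  exact ⟨hk.symm.trans hk', hu.symm.trans hu'⟩

theorem div_pow_padicValNat (hr : r ≠ 0) : p / r ^ padicValNat r p = p.divMaxPow r :=
  Nat.div_eq_of_eq_mul_left (pow_pos (Nat.pos_of_ne_zero hr) _)
    (Nat.divMaxPow_mul_pow_padicValNat r p).symm

end Valuation

namespace Nat.Partition

variable {n : ℕ}

theorem count_parts_le_s16 (μ : n.Partition) (u : ℕ) : μ.parts.count u ≤ n := by
  have hcard : μ.parts.card • 1 ≤ μ.parts.sum :=
    Multiset.card_nsmul_le_sum fun _ hx => μ.parts_pos hx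
  rw [μ.parts_sum, smul_eq_mul, mul_one] at hcard
  exact (Multiset.count_le_card u μ.parts).trans hcard

theorem count_parts_lt_pow {r : ℕ} (hr : 1 < r) (μ : n.Partition) (u : ℕ) :
    μ.parts.count u < r ^ (n + 1) :=
  (μ.count_parts_le_s16 u).trans_lt ((Nat.lt_succ_self n).trans (Nat.lt_pow_self hr))

theorem count_parts_eq_zero (μ : n.Partition) {i : ℕ} (hi : i = 0 ∨ n < i) :
    μ.parts.count i = 0 :=
  Multiset.count_eq_zero.2 fun hmem => by
    have := μ.parts_pos hmem
    have := μ.le_of_mem_parts hmem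
    omega

end Nat.Partition

def digitParts (r N c u : ℕ) : Multiset ℕ :=
  ∑ k ∈ range N, Multiset.replicate (c / r ^ k % r) (r ^ k * u)

section DigitParts

variable {r N c u : ℕ}

theorem sum_digitParts : (digitParts r N c u).sum = c % r ^ N * u := by
  simp only [digitParts, Multiset.sum_sum, Multiset.sum_replicate, smul_eq_mul,
    ← sum_range_pow_mul_div_pow_mod r c N, sum_mul]
  exact sum_congr rfl fun k _ => by ring

theorem exists_eq_pow_mul_of_mem_digitParts {i : ℕ} (hi : i ∈ digitParts r N c u) :
    ∃ k < N, i = r ^ k * u := by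
  obtain ⟨k, hk, hi⟩ := Multiset.mem_sum.1 hi
  exact ⟨k, mem_range.1 hk, Multiset.eq_of_mem_replicate hi⟩

theorem count_digitParts (hr : r ≠ 0) {u' k : ℕ} (hu : ¬ r ∣ u) (hu' : ¬ r ∣ u')
    (hk : k < N) :
    (digitParts r N c u).count (r ^ k * u') = if u = u' then c / r ^ k % r else 0 := by
  rw [digitParts, Multiset.count_sum', sum_eq_single_of_mem k (mem_range.2 hk)]
  · simp [Multiset.count_replicate, hr]
  · intro j _ hj
    rw [Multiset.count_replicate, if_neg]
    exact fun h => hj (pow_mul_inj hr hu hu' h).1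

end DigitParts

theorem mem_RP {r n : ℕ} {l : n.Partition} : l ∈ RP r n ↔ ∀ i, l.parts.count i < r := by
  simp [RP]

theorem mem_CP {r n : ℕ} {l : n.Partition} : l ∈ CP r n ↔ ∀ p ∈ l.parts, ¬ r ∣ p := by
  simp [CP]

section Glaisher

variable {r n : ℕ}

theorem glaisher_parts (hr : r ≠ 0) (l : n.Partition) :
    (glaisher r l).parts =
      l.parts.bind fun p => Multiset.replicate (r ^ padicValNat r p) (p.divMaxPow r) := by
  simp only [glaisher, div_pow_padicValNat hr]

theorem glaisher_mem_CP (hr : 1 < r) (l : n.Partition) : glaisher r l ∈ CP r n := by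
  rw [mem_CP, glaisher_parts (by omega)]
  simp only [Multiset.mem_bind, Multiset.mem_replicate]
  rintro _ ⟨p, hp, -, rfl⟩
  exact Nat.not_dvd_divMaxPow hr (l.parts_pos hp).ne'

theorem count_bind_replicate_divMaxPow {u N : ℕ} (hu : ¬ r ∣ u)
    {s : Multiset ℕ} (hs : ∀ p ∈ s, p ≠ 0 ∧ p < N) :
    (s.bind fun p => Multiset.replicate (r ^ padicValNat r p) (p.divMaxPow r)).count u =
      ∑ k ∈ range N, r ^ k * s.count (r ^ k * u) := by
  induction s using Multiset.induction_on with
  | empty => simp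
  | cons p s ih =>
    obtain ⟨hp, hpN⟩ := hs p (Multiset.mem_cons_self p s)
    have hpart : (Multiset.replicate (r ^ padicValNat r p) (p.divMaxPow r)).count u =
        ∑ k ∈ range N, if r ^ k * u = p then r ^ k else 0 := by
      rw [Multiset.count_replicate, sum_eq_single_of_mem (padicValNat r p)
        (mem_range.2 ((Nat.padicValNat_lt_self hp).trans hpN))]
      · simp only [pow_mul_eq_iff_padicValNat_eq_and_divMaxPow_eq hp hu, true_and]
      · intro k _ hk
        rw [if_neg]
        exact fun h => hk ((pow_mul_eq_iff_padicValNat_eq_and_divMaxPow_eq hp hu).1 h).1.symm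
    rw [Multiset.cons_bind, Multiset.count_add, hpart,
      ih fun q hq => hs q (Multiset.mem_cons_of_mem hq), ← sum_add_distrib]
    refine sum_congr rfl fun k _ => ?_
    rw [Multiset.count_cons]
    split_ifs <;> ring

theorem count_glaisher (hr : r ≠ 0) (l : n.Partition) {u : ℕ} (hu : ¬ r ∣ u) :
    (glaisher r l).parts.count u = ∑ k ∈ range (n + 1), r ^ k * l.parts.count (r ^ k * u) := by
  rw [glaisher_parts hr]
  exact count_bind_replicate_divMaxPow hu fun p hp =>
    ⟨(l.parts_pos hp).ne', Nat.lt_succ_of_le (l.le_of_mem_parts hp)⟩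

def glaisherInv (hr : 1 < r) (μ : n.Partition) : n.Partition where
  parts := ∑ u ∈ μ.parts.toFinset, digitParts r (n + 1) (μ.parts.count u) u
  parts_pos hi := by
    obtain ⟨u, hu, hi⟩ := Multiset.mem_sum.1 hi
    obtain ⟨k, -, rfl⟩ := exists_eq_pow_mul_of_mem_digitParts hi
    exact Nat.mul_pos (pow_pos (by omega) k) (μ.parts_pos (Multiset.mem_toFinset.1 hu))
  parts_sum := by
    have hcount (u : ℕ) : μ.parts.count u % r ^ (n + 1) = μ.parts.count u :=
      Nat.mod_eq_of_lt (μ.count_parts_lt_pow hr u)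
    simp only [Multiset.sum_sum, sum_digitParts, hcount, ← smul_eq_mul]
    rw [← sum_multiset_count, μ.parts_sum]

theorem count_glaisherInv (hr : 1 < r) {μ : n.Partition} (hμ : μ ∈ CP r n) {u k : ℕ}
    (hu : ¬ r ∣ u) (hk : k ≤ n) :
    (glaisherInv hr μ).parts.count (r ^ k * u) = μ.parts.count u / r ^ k % r := by
  rw [mem_CP] at hμ
  have hcount : ∀ u' ∈ μ.parts.toFinset,
      (digitParts r (n + 1) (μ.parts.count u') u').count (r ^ k * u) =
        if u' = u then μ.parts.count u / r ^ k % r else 0 := by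
    intro u' hu'
    rw [count_digitParts (by omega) (hμ u' (Multiset.mem_toFinset.1 hu')) hu (by omega)]
    split_ifs with h <;> simp [h]
  rw [glaisherInv, Multiset.count_sum', sum_congr rfl hcount, sum_ite_eq']
  split_ifs with h
  · rfl
  · rw [Multiset.count_eq_zero.2 (mt Multiset.mem_toFinset.2 h), Nat.zero_div, Nat.zero_mod]

theorem glaisherInv_mem_RP (hr : 1 < r) {μ : n.Partition} (hμ : μ ∈ CP r n) :
    glaisherInv hr μ ∈ RP r n := by
  refine mem_RP.2 fun i => ?_
  by_cases hi : i ∈ (glaisherInv hr μ).parts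
  · obtain ⟨u, hu, hi⟩ := Multiset.mem_sum.1 hi
    obtain ⟨k, hk, rfl⟩ := exists_eq_pow_mul_of_mem_digitParts hi
    rw [count_glaisherInv hr hμ (mem_CP.1 hμ u (Multiset.mem_toFinset.1 hu)) (by omega)]
    exact Nat.mod_lt _ (by omega)
  · rw [Multiset.count_eq_zero.2 hi]
    omega

theorem glaisher_glaisherInv (hr : 1 < r) {μ : n.Partition} (hμ : μ ∈ CP r n) :
    glaisher r (glaisherInv hr μ) = μ := by
  ext i
  by_cases hi : r ∣ i
  · rw [Multiset.count_eq_zero.2 fun h => mem_CP.1 (glaisher_mem_CP hr _) i h hi,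
      Multiset.count_eq_zero.2 fun h => mem_CP.1 hμ i h hi]
  · rw [count_glaisher (by omega) _ hi, sum_congr rfl fun k hk => by
      rw [count_glaisherInv hr hμ hi (Nat.lt_succ_iff.1 (mem_range.1 hk))],
      sum_range_pow_mul_div_pow_mod, Nat.mod_eq_of_lt (μ.count_parts_lt_pow hr i)]

theorem glaisherInv_glaisher (hr : 1 < r) {l : n.Partition} (hl : l ∈ RP r n) :
    glaisherInv hr (glaisher r l) = l := by
  ext i
  by_cases hi : i = 0 ∨ n < i
  · rw [Nat.Partition.count_parts_eq_zero _ hi, Nat.Partition.count_parts_eq_zero _ hi]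
  obtain ⟨k, u, hu, hk, rfl⟩ : ∃ k u, ¬ r ∣ u ∧ k ≤ n ∧ r ^ k * u = i :=
    ⟨padicValNat r i, i.divMaxPow r, Nat.not_dvd_divMaxPow hr (by omega),
      (Nat.padicValNat_le_self i).trans (by omega), Nat.pow_padicValNat_mul_divMaxPow r i⟩
  rw [count_glaisherInv hr (glaisher_mem_CP hr l) hu hk, count_glaisher (by omega) l hu]
  exact sum_range_pow_mul_div_pow_mod_of_lt (fun j => mem_RP.1 hl _) (by omega)

end Glaisher

/-- The Glaisher map is a bijection from the `r`-regular partitions of `n` onto the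
`r`-class regular partitions of `n`. -/
theorem glaisher_bijOn (r n : ℕ) (hr : 2 ≤ r) :
    Set.BijOn (glaisher r) (RP r n : Set n.Partition) (CP r n : Set n.Partition) :=
  Set.InvOn.bijOn
    ⟨fun _ hl => glaisherInv_glaisher hr hl, fun _ hμ => glaisher_glaisherInv hr hμ⟩
    (fun l _ => glaisher_mem_CP hr l) (fun _ hμ => glaisherInv_mem_RP hr hμ)
end
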